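/- arXiv:1508.06760 — 15 statements merged into one kernel-verified Lean document; each statement's English description precedes it below -/
import Mathlib

section
/- Call a pair (p, c) of a point p ∈ P and a color c ∈ C conflicting if f(p) ≠ c and x_l(c) ≤ x(p) ≤ x_r(c). A bus realization y : C → ℝ of a colored point set is planar if and only if for every conflicting pair (p, c) either (y(p) < y(c) and y(f(p)) < y(c)) or (y(p) > y(c) and y(f(p)) > y(c)). -/
open Set

/-- A colored point set: a finite set of points `P` with coordinates `x p`, `y p`
and colors `f p` in a finite color set `C`; the color map is surjective and no
two points share an x-coordinate or a y-coordinate. -/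
structure CPS (P C : Type) [Fintype P] [Fintype C] where
  x : P → ℝ
  y : P → ℝ
  f : P → C
  f_surj : Function.Surjective f
  x_inj : Function.Injective x
  y_inj : Function.Injective y

variable {P C : Type} [Fintype P] [Fintype C]

/-- Left end `x_l(c)` of the span of color `c`. -/
noncomputable def xl (S : CPS P C) (c : C) : ℝ :=
  sInf (S.x '' {p | S.f p = c})

/-- Right end `x_r(c)` of the span of color `c`. -/
noncomputable def xr (S : CPS P C) (c : C) : ℝ :=
  sSup (S.x '' {p | S.f p = c})

/-- The bus of color `c`: the horizontal segment at height `Y c` over the span of `c`. -/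
def busSeg (S : CPS P C) (Y : C → ℝ) (c : C) : Set (ℝ × ℝ) :=
  {q | q.2 = Y c ∧ q.1 ∈ Icc (xl S c) (xr S c)}

/-- The connection segment of point `p`: the vertical segment from `p` to its bus. -/
def connSeg (S : CPS P C) (Y : C → ℝ) (p : P) : Set (ℝ × ℝ) :=
  {q | q.1 = S.x p ∧ q.2 ∈ uIcc (S.y p) (Y (S.f p))}

/-- Planarity of a bus realization `Y`: no bus contains a point of a different
color, no bus intersects the connection segment of a point of a different color,
and no two connection segments of points of different colors intersect. -/
def PlanarBus (S : CPS P C) (Y : C → ℝ) : Prop :=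
  (∀ (c : C) (p : P), S.f p ≠ c → (S.x p, S.y p) ∉ busSeg S Y c) ∧
  (∀ (c : C) (p : P), S.f p ≠ c → Disjoint (busSeg S Y c) (connSeg S Y p)) ∧
  (∀ p q : P, S.f p ≠ S.f q → Disjoint (connSeg S Y p) (connSeg S Y q))

/-- a bus realization is planar iff for every conflicting pair
`(p, c)` (that is, `f p ≠ c` and `x p` lies in the span of `c`) both the point
`p` and its bus lie strictly on the same side of the bus of `c`. -/
theorem stmt1 {P C : Type} [Fintype P] [Fintype C] (S : CPS P C)
    (Y : C → ℝ) (hY : Function.Injective Y) :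
    PlanarBus S Y ↔
      ∀ (p : P) (c : C), S.f p ≠ c → xl S c ≤ S.x p → S.x p ≤ xr S c →
        ((S.y p < Y c ∧ Y (S.f p) < Y c) ∨ (S.y p > Y c ∧ Y (S.f p) > Y c)) := by
  constructor
  · rintro ⟨h1, h2, h3⟩ p c hpc hl hr
    have hd := h2 c p hpc
    have hnot : Y c ∉ uIcc (S.y p) (Y (S.f p)) := by
      intro hm
      exact hd.ne_of_mem (show (S.x p, Y c) ∈ busSeg S Y c from ⟨rfl, hl, hr⟩)
        (show (S.x p, Y c) ∈ connSeg S Y p from ⟨rfl, hm⟩) rfl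
    rw [Set.mem_uIcc] at hnot
    push_neg at hnot
    obtain ⟨hA, hB⟩ := hnot
    rcases le_or_gt (S.y p) (Y c) with h | h
    · exact Or.inl ⟨hB (le_of_lt (hA h)), hA h⟩
    · refine Or.inr ⟨h, ?_⟩
      by_contra hcon
      push_neg at hcon
      exact absurd (hB hcon) (not_lt.mpr h.le)
  · intro h
    refine ⟨?_, ?_, ?_⟩
    · rintro c p hpc ⟨hy, hl, hr⟩
      rcases h p c hpc hl hr with ⟨h1, _⟩ | ⟨h1, _⟩ <;> simp only [] at hy <;> linarith [hy]
    · intro c p hpc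
      rw [Set.disjoint_left]
      rintro q ⟨hq2, hl, hr⟩ ⟨hq1, hm⟩
      rw [hq1] at hl hr
      rw [hq2, Set.mem_uIcc] at hm
      rcases h p c hpc hl hr with ⟨h1, h2⟩ | ⟨h1, h2⟩ <;>
        rcases hm with ⟨ha, hb⟩ | ⟨ha, hb⟩ <;> linarith
    · intro p q hpq
      rw [Set.disjoint_left]
      rintro z ⟨hz1, _⟩ ⟨hz1', _⟩
      exact hpq (congrArg S.f (S.x_inj (hz1.symm.trans hz1')))
end

section
/- In every planar bus realization of a colored point set, if c is the color whose bus height y(c) is maximal among all buses, then every point p with f(p) ≠ c and x_l(c) ≤ x(p) ≤ x_r(c) satisfies y(p) < y(c); that is, the topmost bus lies strictly above all points of other colors in its span. -/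
open Set

variable {P C : Type} [Fintype P] [Fintype C]

/-- in every planar bus realization, the topmost bus lies strictly
above all points of other colors in its span. -/
theorem stmt2 {P C : Type} [Fintype P] [Fintype C] (S : CPS P C)
    (Y : C → ℝ) (hY : Function.Injective Y) (hpl : PlanarBus S Y)
    (c : C) (hmax : ∀ c' : C, Y c' ≤ Y c)
    (p : P) (hp : S.f p ≠ c) (h1 : xl S c ≤ S.x p) (h2 : S.x p ≤ xr S c) :
    S.y p < Y c := by
  by_contra h
  push_neg at h
  have hd := hpl.2.1 c p hp
  have hmem : (S.x p, Y c) ∈ busSeg S Y c ∩ connSeg S Y p := by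
    constructor
    · exact ⟨rfl, h1, h2⟩
    · exact ⟨rfl, Set.mem_uIcc.2 (Or.inr ⟨hmax (S.f p), h⟩)⟩
  exact Set.disjoint_iff.1 hd hmem
end

section
/- Fix an ordering c_1, …, c_k of the colors. For 1 ≤ i ≤ k let M_i = max{ y(p) : f(p) ∈ {c_1, …, c_{i−1}} and x_l(c_i) ≤ x(p) ≤ x_r(c_i) }, where M_i is taken to be (min_{p ∈ P} y(p)) − 1 if no such point exists. For δ > 0 define recursively g_0 = (min_{p ∈ P} y(p)) − 1 and g_i = max(g_{i−1}, M_i) + δ, and let the greedy realization be y(c_i) = g_i. Then there exist δ_0 > 0 and a finite set Δ ⊂ ℝ such that for every δ ∈ (0, δ_0) \ Δ: a planar bus realization with y(c_1) < y(c_2) < … < y(c_k) exists if and only if the greedy realization is planar. -/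
/-!
A planar realization `Y` with increasing bus order forces every point `p` lying in the span of
an earlier color `c` to sit strictly above the bus of `c`, and every point of an earlier color in
the span of `c` to sit strictly below it. The greedy heights with `δ = 0` are, by induction, maxima
of such "below" points, hence lie strictly below every point that has to be above them. The
greedy heights depend continuously on `δ`, so for all small `δ > 0` these strict inequalities
persist, while the `+ δ` steps keep the greedy buses strictly increasing and strictly above
all earlier points in their spans; no exceptional values of `δ` arise, so `Δ = ∅`.
-/

open Set

variable {P C : Type} [Fintype P] [Fintype C]

open Filter Topology

def lowerPoints (S : CPS P C) {k : ℕ} (e : Fin k ≃ C) (i : Fin k) : Set P :=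
  {p | (∃ j : Fin k, j < i ∧ S.f p = e j) ∧ xl S (e i) ≤ S.x p ∧ S.x p ≤ xr S (e i)}

theorem planarBus_iff {S : CPS P C} {Y : C → ℝ} :
    PlanarBus S Y ↔ ∀ (c : C) (p : P), S.f p ≠ c → xl S c ≤ S.x p → S.x p ≤ xr S c →
      Y c ∉ uIcc (S.y p) (Y (S.f p)) := by
  constructor
  · intro hY c p hne h₁ h₂ hmem
    exact Set.disjoint_left.mp (hY.2.1 c p hne) (show (S.x p, Y c) ∈ busSeg S Y c from
      ⟨rfl, h₁, h₂⟩) ⟨rfl, hmem⟩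
  · intro h
    refine ⟨fun c p hne ⟨hy, h₁, h₂⟩ => h c p hne h₁ h₂ (hy ▸ left_mem_uIcc), fun c p hne => ?_,
      fun p q hpq => ?_⟩
    · rw [Set.disjoint_left]
      rintro ⟨a, b⟩ ⟨rfl, h₁, h₂⟩ ⟨rfl, hmem⟩
      exact h c p hne h₁ h₂ hmem
    · rw [Set.disjoint_left]
      rintro a ⟨hp, -⟩ ⟨hq, -⟩
      exact hpq (congrArg S.f (S.x_inj (hp.symm.trans hq)))

namespace PlanarBus

variable {S : CPS P C} {Y : C → ℝ} {c : C} {p : P}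

theorem y_lt_of_lt (hY : PlanarBus S Y) (h₁ : xl S c ≤ S.x p) (h₂ : S.x p ≤ xr S c)
    (h : Y (S.f p) < Y c) : S.y p < Y c := by
  by_contra! hle
  exact planarBus_iff.mp hY c p (fun hc => h.ne (hc ▸ rfl)) h₁ h₂
    (mem_uIcc.mpr (Or.inr ⟨h.le, hle⟩))

theorem lt_y_of_lt (hY : PlanarBus S Y) (h₁ : xl S c ≤ S.x p) (h₂ : S.x p ≤ xr S c)
    (h : Y c < Y (S.f p)) : Y c < S.y p := by
  by_contra! hle
  exact planarBus_iff.mp hY c p (fun hc => h.ne (hc ▸ rfl)) h₁ h₂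
    (mem_uIcc.mpr (Or.inl ⟨hle, h.le⟩))

end PlanarBus

section Greedy

variable {k : ℕ} {M : Fin k → ℝ} {g : ℝ → ℕ → ℝ}

theorem greedy_strictMono
    (hgs : ∀ (δ : ℝ) (i : ℕ) (h : i < k), g δ (i + 1) = max (g δ i) (M ⟨i, h⟩) + δ)
    {δ : ℝ} (hδ : 0 < δ) : StrictMono fun i : Fin k => g δ (i + 1) := by
  have hmono : StrictMonoOn (g δ) (Iic k) := strictMonoOn_Iic_of_lt_succ fun i hi => by
    rw [Order.succ_eq_add_one, hgs δ i hi]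
    linarith [le_max_left (g δ i) (M ⟨i, hi⟩)]
  intro i j hij
  exact hmono (show (i : ℕ) + 1 ≤ k from i.isLt) (show (j : ℕ) + 1 ≤ k from j.isLt)
    (Nat.succ_lt_succ hij)

theorem continuous_greedy {b : ℝ} (hg0 : ∀ δ : ℝ, g δ 0 = b)
    (hgs : ∀ (δ : ℝ) (i : ℕ) (h : i < k), g δ (i + 1) = max (g δ i) (M ⟨i, h⟩) + δ) :
    ∀ n ≤ k, Continuous fun δ => g δ n := by
  intro n
  induction n with
  | zero => intro; simp only [hg0]; exact continuous_const
  | succ n ih =>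
    intro hn
    simp only [hgs _ n hn]
    exact ((ih (n.le_succ.trans hn)).max continuous_const).add continuous_id

end Greedy

section Realization

variable {S : CPS P C} {k : ℕ} {e : Fin k ≃ C} {ymin : ℝ} {M : Fin k → ℝ} {g : ℝ → ℕ → ℝ}

theorem greedy_zero_lt_of_planarBus (hymin : ∀ p, ymin ≤ S.y p)
    (hM : ∀ i : Fin k, M i = sSup (insert (ymin - 1) (S.y '' lowerPoints S e i)))
    (hg0 : ∀ δ : ℝ, g δ 0 = ymin - 1)
    (hgs : ∀ (δ : ℝ) (i : ℕ) (h : i < k), g δ (i + 1) = max (g δ i) (M ⟨i, h⟩) + δ)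
    {Y : C → ℝ} (hY : PlanarBus S Y) (hYmono : StrictMono fun i : Fin k => Y (e i))
    {i : Fin k} {p : P} (hip : i < e.symm (S.f p)) (h₁ : xl S (e i) ≤ S.x p)
    (h₂ : S.x p ≤ xr S (e i)) : g 0 (i + 1) < S.y p := by
  have hYS : Y (e i) < S.y p :=
    hY.lt_y_of_lt h₁ h₂ (by simpa using hYmono hip)
  suffices ∀ n ≤ (i : ℕ) + 1, g 0 n < S.y p from this _ le_rfl
  intro n
  induction n with
  | zero => intro; linarith [hg0 0, hymin p]
  | succ m ih =>
    intro hm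
    have hmk : m < k := by omega
    have hM_lt : M ⟨m, hmk⟩ < S.y p := by
      rw [hM, (Set.toFinite _).csSup_lt_iff (insert_nonempty _ _)]
      rintro _ (rfl | ⟨q, ⟨⟨j, hjm, hqj⟩, hq₁, hq₂⟩, rfl⟩)
      · linarith [hymin p]
      · have hmi : Y (e ⟨m, hmk⟩) ≤ Y (e i) :=
          hYmono.monotone (Fin.mk_le_of_le_val (by omega))
        have hq : S.y q < Y (e ⟨m, hmk⟩) := hY.y_lt_of_lt hq₁ hq₂ (hqj ▸ hYmono hjm)
        linarith
    rw [hgs 0 m hmk, add_zero]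
    exact max_lt (ih (by omega)) hM_lt

theorem planarBus_greedy
    (hM : ∀ i : Fin k, M i = sSup (insert (ymin - 1) (S.y '' lowerPoints S e i)))
    (hgs : ∀ (δ : ℝ) (i : ℕ) (h : i < k), g δ (i + 1) = max (g δ i) (M ⟨i, h⟩) + δ)
    {δ : ℝ} (hδ : 0 < δ)
    (habove : ∀ (i : Fin k) (p : P), i < e.symm (S.f p) → xl S (e i) ≤ S.x p →
      S.x p ≤ xr S (e i) → g δ (i + 1) < S.y p) :
    PlanarBus S (fun c : C => g δ ((e.symm c : ℕ) + 1)) := by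
  have hmono := greedy_strictMono hgs hδ
  refine planarBus_iff.mpr fun c p hne h₁ h₂ => ?_
  obtain ⟨i, rfl⟩ := e.surjective c
  have hne' : e.symm (S.f p) ≠ i := fun h => hne (by rw [← h, Equiv.apply_symm_apply])
  simp only [Equiv.symm_apply_apply]
  rcases hne'.lt_or_gt with hlt | hgt
  · have hpM : S.y p ≤ M i := by
      rw [hM]
      exact le_csSup (Set.toFinite _).bddAbove
        (mem_insert_of_mem _ ⟨p, ⟨⟨_, hlt, (e.apply_symm_apply _).symm⟩, h₁, h₂⟩, rfl⟩)
    have hMg : M i + δ ≤ g δ (i + 1) := by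
      rw [hgs δ i i.isLt]
      linarith [le_max_right (g δ i) (M ⟨i, i.isLt⟩)]
    exact notMem_uIcc_of_gt (by linarith) (hmono hlt)
  · exact notMem_uIcc_of_lt (habove i p hgt h₁ h₂) (hmono hgt)

end Realization

theorem stmt3_general {P C : Type} [Fintype P] [Fintype C] (S : CPS P C)
    {k : ℕ} (e : Fin k ≃ C)
    (ymin : ℝ) (hymin : ymin = sInf (Set.range S.y))
    (M : Fin k → ℝ)
    (hM : ∀ i : Fin k, M i = sSup (insert (ymin - 1)
      (S.y '' {p | (∃ j : Fin k, j < i ∧ S.f p = e j) ∧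
        xl S (e i) ≤ S.x p ∧ S.x p ≤ xr S (e i)})))
    (g : ℝ → ℕ → ℝ)
    (hg0 : ∀ δ : ℝ, g δ 0 = ymin - 1)
    (hgs : ∀ (δ : ℝ) (i : ℕ) (h : i < k), g δ (i + 1) = max (g δ i) (M ⟨i, h⟩) + δ) :
    ∃ δ₀ > (0 : ℝ), ∃ Δ : Finset ℝ, ∀ δ : ℝ, 0 < δ → δ < δ₀ → δ ∉ Δ →
      ((∃ Y : C → ℝ, Function.Injective Y ∧ PlanarBus S Y ∧
          StrictMono (fun i : Fin k => Y (e i))) ↔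
        (Function.Injective (fun c : C => g δ ((e.symm c : ℕ) + 1)) ∧
          PlanarBus S (fun c : C => g δ ((e.symm c : ℕ) + 1)))) := by
  have hle : ∀ p, ymin ≤ S.y p := fun p =>
    hymin ▸ csInf_le (Set.finite_range S.y).bddBelow ⟨p, rfl⟩
  have hnear : ∀ᶠ δ in 𝓝[>] 0, ∀ (i : Fin k) (p : P),
      g 0 (i + 1) < S.y p → g δ (i + 1) < S.y p :=
    eventually_all.mpr fun i => eventually_all.mpr fun p => eventually_imp_distrib_left.mpr
      fun h => ((continuous_greedy hg0 hgs _ i.isLt).tendsto 0 |>.mono_left nhdsWithin_le_nhds)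
        |>.eventually_lt_const h
  obtain ⟨δ₀, hδ₀, hsmall⟩ := (nhdsGT_basis (0 : ℝ)).eventually_iff.mp hnear
  refine ⟨δ₀, hδ₀, ∅, fun δ hδ hδδ₀ _ => ⟨?_, fun ⟨hinj, hpl⟩ => ⟨_, hinj, hpl, ?_⟩⟩⟩
  · rintro ⟨Y, -, hY, hYmono⟩
    refine ⟨(greedy_strictMono hgs hδ).injective.comp e.symm.injective,
      planarBus_greedy hM hgs hδ fun i p hip h₁ h₂ => hsmall ⟨hδ, hδδ₀⟩ i p ?_⟩
    exact greedy_zero_lt_of_planarBus hle hM hg0 hgs hY hYmono hip h₁ h₂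
  · simpa using greedy_strictMono hgs hδ

/-- correctness of the greedy realization. Given an ordering
`e 0, …, e (k-1)` of the colors, the values `M i` and the greedy heights
`g δ (i+1)` as in the statement, there exist `δ₀ > 0` and a finite exception
set `Δ` such that for every `δ ∈ (0, δ₀) \ Δ`, a planar bus realization with
increasing bus order exists iff the greedy realization is a planar bus
realization. -/
theorem stmt3 {P C : Type} [Fintype P] [Fintype C] [Nonempty P] (S : CPS P C)
    {k : ℕ} (e : Fin k ≃ C)
    (ymin : ℝ) (hymin : ymin = sInf (Set.range S.y))
    (M : Fin k → ℝ)
    (hM : ∀ i : Fin k, M i = sSup (insert (ymin - 1)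
      (S.y '' {p | (∃ j : Fin k, j < i ∧ S.f p = e j) ∧
        xl S (e i) ≤ S.x p ∧ S.x p ≤ xr S (e i)})))
    (g : ℝ → ℕ → ℝ)
    (hg0 : ∀ δ : ℝ, g δ 0 = ymin - 1)
    (hgs : ∀ (δ : ℝ) (i : ℕ) (h : i < k), g δ (i + 1) = max (g δ i) (M ⟨i, h⟩) + δ) :
    ∃ δ₀ > (0 : ℝ), ∃ Δ : Finset ℝ, ∀ δ : ℝ, 0 < δ → δ < δ₀ → δ ∉ Δ →
      ((∃ Y : C → ℝ, Function.Injective Y ∧ PlanarBus S Y ∧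
          StrictMono (fun i : Fin k => Y (e i))) ↔
        (Function.Injective (fun c : C => g δ ((e.symm c : ℕ) + 1)) ∧
          PlanarBus S (fun c : C => g δ ((e.symm c : ℕ) + 1)))) :=
  stmt3_general S e ymin hymin M hM g hg0 hgs
end

section
/- Fix an ordering c_1, …, c_k of the colors. Define m_0 = −∞ and m_i = max(m_{i−1}, M_i), where M_i = max{ y(p) : f(p) ∈ {c_1, …, c_{i−1}} and x_l(c_i) ≤ x(p) ≤ x_r(c_i) } (taken as −∞ if no such point exists). Then every planar bus realization with y(c_1) < y(c_2) < … < y(c_k) satisfies y(c_i) > m_i for every i with m_i finite; in particular, y(c_i) > y(q) for every point q of a color c_j with j < i lying in the span of c_i. -/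
open Set

variable {P C : Type} [Fintype P] [Fintype C]

/-- every planar bus realization respecting the order
`Y (e 0) < … < Y (e (k-1))` satisfies `Y (e i) > m (i+1)` whenever `m (i+1)` is
finite, where `m` is the running maximum of the `M i`; in particular
`Y (e i) > y q` for every point `q` of an earlier color lying in the span of
`e i`. -/
theorem stmt4 {P C : Type} [Fintype P] [Fintype C] (S : CPS P C)
    {k : ℕ} (e : Fin k ≃ C)
    (M : Fin k → EReal)
    (hM : ∀ i : Fin k, M i = sSup {v : EReal | ∃ p : P,
      (∃ j : Fin k, j < i ∧ S.f p = e j) ∧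
      xl S (e i) ≤ S.x p ∧ S.x p ≤ xr S (e i) ∧ v = (S.y p : EReal)})
    (m : ℕ → EReal) (hm0 : m 0 = ⊥)
    (hms : ∀ (i : ℕ) (h : i < k), m (i + 1) = max (m i) (M ⟨i, h⟩))
    (Y : C → ℝ) (hY : Function.Injective Y) (hpl : PlanarBus S Y)
    (hmono : StrictMono (fun i : Fin k => Y (e i))) :
    (∀ i : Fin k, m ((i : ℕ) + 1) ≠ ⊥ → m ((i : ℕ) + 1) < (Y (e i) : EReal)) ∧
    (∀ i j : Fin k, j < i → ∀ q : P, S.f q = e j →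
      xl S (e i) ≤ S.x q → S.x q ≤ xr S (e i) → S.y q < Y (e i)) := by

  -- Key claim: a point of an earlier color in the span of `e i` lies below the bus of `e i`.
  have key : ∀ i j : Fin k, j < i → ∀ q : P, S.f q = e j →
      xl S (e i) ≤ S.x q → S.x q ≤ xr S (e i) → S.y q < Y (e i) := by
    intro i j hji q hfq h1 h2
    by_contra hle
    push_neg at hle
    have hne : S.f q ≠ e i := by
      rw [hfq]
      exact fun h => absurd (e.injective h) hji.ne
    have hd := hpl.2.1 (e i) q hne
    have hmem1 : (S.x q, Y (e i)) ∈ busSeg S Y (e i) := ⟨rfl, h1, h2⟩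
    have hmem2 : (S.x q, Y (e i)) ∈ connSeg S Y q := by
      refine ⟨rfl, ?_⟩
      rw [hfq]
      exact mem_uIcc.2 (Or.inr ⟨(hmono hji).le, hle⟩)
    exact Set.disjoint_left.1 hd hmem1 hmem2
  -- Each M i is below Y (e i)
  have keyM : ∀ i : Fin k, M i < (Y (e i) : EReal) := by
    intro i
    rw [hM i]
    set s : Set EReal := {v : EReal | ∃ p : P,
      (∃ j : Fin k, j < i ∧ S.f p = e j) ∧
      xl S (e i) ≤ S.x p ∧ S.x p ≤ xr S (e i) ∧ v = (S.y p : EReal)} with hs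
    have hfin : s.Finite := by
      apply (Set.finite_range (fun p : P => (S.y p : EReal))).subset
      rintro v ⟨p, _, _, _, rfl⟩
      exact ⟨p, rfl⟩
    rcases Set.eq_empty_or_nonempty s with he | hne
    · rw [he, sSup_empty]
      exact EReal.bot_lt_coe _
    · have hmem := hne.csSup_mem hfin
      obtain ⟨p, ⟨j, hji, hfp⟩, hx1, hx2, hv⟩ := hmem
      rw [hv]
      exact EReal.coe_lt_coe_iff.2 (key i j hji p hfp hx1 hx2)
  -- m (i+1) < Y (e i) always
  have hmlt : ∀ (i : ℕ) (h : i < k), m (i + 1) < (Y (e ⟨i, h⟩) : EReal) := by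
    intro i
    induction i with
    | zero =>
      intro h
      rw [hms 0 h, hm0]
      exact max_lt (EReal.bot_lt_coe _) (keyM ⟨0, h⟩)
    | succ n ih =>
      intro h
      have hn : n < k := Nat.lt_of_succ_lt h
      have hlt : Y (e ⟨n, hn⟩) < Y (e ⟨n + 1, h⟩) := hmono (by simp [Fin.lt_def])
      rw [hms (n + 1) h]
      exact max_lt (lt_trans (ih hn) (EReal.coe_lt_coe_iff.2 hlt)) (keyM ⟨n + 1, h⟩)
  refine ⟨fun i _ => ?_, key⟩
  have := hmlt i.1 i.2
  simpa using this
end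

section
/- Consider the following sweep process on a colored point set P: process the points in increasing order of y-coordinate, maintaining a sequence L of points ordered by increasing x-coordinate, initially empty; insert each processed point into L at the position determined by its x-coordinate, and after each insertion repeatedly delete from L the points of any color c such that all points of color c are currently in L and form a block of consecutive entries of L, as long as such a color exists. Then P admits a planar bus realization in which every bus is a ⊓-bus if and only if L is empty after all points of P have been processed. -/
/-!
Run the sweep while recording, for every deleted color, the number of points inserted before
its deletion and its rank in the order of deletions. If the list ends empty, put each bus just
above the last point inserted before its deletion, stacking the buses deleted after the same
insertion in order of deletion: a point of another color in the span of a bus was either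
inserted later, hence lies above the bus, or has a color deleted earlier, whose bus is lower.

Conversely, take a planar realization by ⊓-buses and a color whose points are all still present
when the sweep reaches its bus. It is not removable there, so a point of another color lies in
its span below the bus; planarity puts the bus of that color lower, and that color is still
present at its own bus as well. Bus heights cannot descend forever, so the list ends empty.
-/

open Set

variable {P C : Type} [Fintype P] [Fintype C]

/-- Color `c` is removable from the current sweep list `A`: all points of color
`c` are currently in `A` and they form a block of consecutive entries of `A` in
x-order (every point of `A` lying in the span of `c` has color `c`). -/
def removable (S : CPS P C) (A : Finset P) (c : C) : Prop :=
  (∀ p : P, S.f p = c → p ∈ A) ∧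
  (∀ q ∈ A, xl S c ≤ S.x q → S.x q ≤ xr S c → S.f q = c)

/-- One simplification step: delete from `A` the points of a removable color. -/
def sweepStep [DecidableEq P] [DecidableEq C] (S : CPS P C) (A B : Finset P) : Prop :=
  ∃ c : C, removable S A c ∧ B = A.filter (fun p => S.f p ≠ c)

/-- `A` admits no further deletion. -/
def sweepReduced (S : CPS P C) (A : Finset P) : Prop :=
  ∀ c : C, ¬ removable S A c

/-- `B` is obtained from `A` by repeatedly deleting removable colors as long as
such a color exists. -/
def reducesTo [DecidableEq P] [DecidableEq C] (S : CPS P C) (A B : Finset P) : Prop :=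
  Relation.ReflTransGen (sweepStep S) A B ∧ sweepReduced S B

theorem List.mem_takeWhile_iff_of_pairwise {α : Type*} {Q : α → Prop} [DecidablePred Q]
    {l : List α} (hl : l.Pairwise fun a b => Q b → Q a) {a : α} (ha : a ∈ l) :
    a ∈ l.takeWhile (fun b => decide (Q b)) ↔ Q a := by
  induction l with
  | nil => simp at ha
  | cons b l ih =>
    obtain ⟨hb, hl⟩ := List.pairwise_cons.1 hl
    by_cases hQb : Q b
    · rcases List.mem_cons.1 ha with rfl | ha
      · simp [hQb]
      · rw [List.takeWhile_cons, if_pos (decide_eq_true hQb), List.mem_cons, ih hl ha]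
        exact or_iff_right_of_imp fun h => h ▸ hQb
    · rcases List.mem_cons.1 ha with rfl | ha
      · simp [hQb]
      · simpa [List.takeWhile_cons, hQb] using mt (hb a ha) hQb

theorem List.mem_drop_of_mem_of_notMem_take {α : Type*} {l : List α} {a : α} {k : ℕ}
    (ha : a ∈ l) (hk : a ∉ l.take k) : a ∈ l.drop k := by
  rw [← List.take_append_drop k l, List.mem_append] at ha
  exact ha.resolve_left hk

theorem List.Nodup.getElem_notMem_take {α : Type*} {l : List α} (hl : l.Nodup) {i : ℕ}
    (hi : i < l.length) : l[i] ∉ l.take i := by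
  have h := hl.sublist (List.take_sublist (i + 1) l)
  rw [← List.take_concat_get' l i hi, List.nodup_append] at h
  exact fun hmem => h.2.2 _ hmem _ (List.mem_singleton_self _) rfl

theorem Finset.exists_pos_gap (T : Finset ℝ) :
    ∃ g > 0, ∀ s ∈ T, ∀ t ∈ T, s < t → s + g ≤ t := by
  classical
  set G := insert 1 (((T ×ˢ T).filter fun st => st.1 < st.2).image fun st => st.2 - st.1)
  refine ⟨G.min' (Finset.insert_nonempty _ _), ?_, fun s hs t ht hst => ?_⟩
  · rw [gt_iff_lt, Finset.lt_min'_iff]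
    intro d hd
    rcases Finset.mem_insert.1 hd with rfl | hd
    · exact one_pos
    · obtain ⟨st, hst, rfl⟩ := Finset.mem_image.1 hd
      exact sub_pos.2 (Finset.mem_filter.1 hst).2
  · have : G.min' _ ≤ t - s := G.min'_le _ (Finset.mem_insert_of_mem (Finset.mem_image.2
      ⟨(s, t), Finset.mem_filter.2 ⟨Finset.mem_product.2 ⟨hs, ht⟩, hst⟩, rfl⟩))
    linarith

/-- Take `Y i = b i + g - g / (r i + 2)`, where `g` is the smallest gap between values of `T`. -/
theorem exists_heights_between {ι : Type*} (T : Finset ℝ) (b : ι → ℝ) (hb : ∀ i, b i ∈ T)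
    (r : ι → ℕ) (hbr : ∀ i j, r i < r j → b i ≤ b j) :
    ∃ Y : ι → ℝ, (∀ i, b i < Y i) ∧ (∀ i, ∀ t ∈ T, b i < t → Y i < t) ∧
      ∀ i j, r i < r j → Y i < Y j := by
  obtain ⟨g, hg, hgap⟩ := T.exists_pos_gap
  have hpos : ∀ i, 0 < g / (r i + 2) := fun i => by positivity
  have hlt : ∀ i, g / (r i + 2) < g := fun i =>
    div_lt_self hg (by have := (r i).cast_nonneg (α := ℝ); linarith)
  refine ⟨fun i => b i + g - g / (r i + 2), fun i => by linarith [hlt i],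
    fun i t ht hbt => by linarith [hgap _ (hb i) _ ht hbt, hpos i], fun i j hij => ?_⟩
  dsimp only
  rcases (hbr i j hij).lt_or_eq with hb' | hb'
  · linarith [hgap _ (hb i) _ (hb j) hb', hpos i, hlt j]
  · have : g / (r j + 2) < g / (r i + 2) :=
      div_lt_div_of_pos_left hg (by positivity) (by exact_mod_cast Nat.add_lt_add_right hij 2)
    rw [hb']
    linarith

/-- `D` is the set of colors deleted while the first `i` points of `pts` were inserted:
`c ∈ D` was the `r c`-th deletion, made after the insertion of the first `K c` points. -/
structure IsDeletionSchedule (S : CPS P C) (pts : List P) (i : ℕ) (D : Finset C)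
    (r K : C → ℕ) : Prop where
  injOn_rank : Set.InjOn r D
  rank_lt_card : ∀ c ∈ D, r c < D.card
  time_le : ∀ c ∈ D, K c ≤ i
  time_le_of_rank_lt : ∀ c ∈ D, ∀ d ∈ D, r d < r c → K d ≤ K c
  mem_take_time : ∀ c ∈ D, ∀ p, S.f p = c → p ∈ pts.take (K c)
  earlier_of_mem_span : ∀ c ∈ D, ∀ q ∈ pts.take (K c), S.f q ≠ c →
    xl S c ≤ S.x q → S.x q ≤ xr S c → S.f q ∈ D ∧ r (S.f q) < r c

namespace IsDeletionSchedule

variable {S : CPS P C} {pts : List P} {i : ℕ} {D : Finset C} {r K : C → ℕ}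

theorem mono (hs : IsDeletionSchedule S pts i D r K) {j : ℕ} (hij : i ≤ j) :
    IsDeletionSchedule S pts j D r K :=
  { hs with time_le := fun c hc => (hs.time_le c hc).trans hij }

theorem insert_filter_take [DecidableEq P] [DecidableEq C] (hs : IsDeletionSchedule S pts i D r K)
    (hnd : pts.Nodup) (hi : i < pts.length) :
    insert pts[i] ((pts.take i).toFinset.filter fun p => S.f p ∉ D) =
      (pts.take (i + 1)).toFinset.filter fun p => S.f p ∉ D := by
  have hnew : S.f pts[i] ∉ D := fun hD => hnd.getElem_notMem_take hi
    (List.take_subset_take_left pts (hs.time_le _ hD) (hs.mem_take_time _ hD _ rfl))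
  rw [← List.take_concat_get' pts i hi, List.toFinset_append, Finset.filter_union,
    List.toFinset_cons, List.toFinset_nil, insert_empty_eq, Finset.filter_singleton, if_pos hnew,
    Finset.union_singleton]

theorem delete [DecidableEq P] [DecidableEq C] (hs : IsDeletionSchedule S pts i D r K) {c : C}
    (hc : removable S ((pts.take i).toFinset.filter fun p => S.f p ∉ D) c) :
    IsDeletionSchedule S pts i (insert c D) (Function.update r c D.card)
      (Function.update K c i) := by
  have hcD : c ∉ D := by
    obtain ⟨p, rfl⟩ := S.f_surj c
    exact (Finset.mem_filter.1 (hc.1 p rfl)).2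
  have hr : ∀ d ∈ D, Function.update r c D.card d = r d := fun d hd =>
    Function.update_of_ne (ne_of_mem_of_not_mem hd hcD) _ _
  have hK : ∀ d ∈ D, Function.update K c i d = K d := fun d hd =>
    Function.update_of_ne (ne_of_mem_of_not_mem hd hcD) _ _
  refine ⟨?_, ?_, ?_, ?_, ?_, ?_⟩
  · rw [Finset.coe_insert, Set.injOn_insert (by exact_mod_cast hcD)]
    refine ⟨hs.injOn_rank.congr fun d hd => (hr d hd).symm, ?_⟩
    rintro ⟨d, hd, hdc⟩
    rw [hr d hd, Function.update_self] at hdc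
    exact (hs.rank_lt_card d hd).ne hdc
  · intro d hd
    rw [Finset.card_insert_of_notMem hcD]
    rcases Finset.mem_insert.1 hd with rfl | hd
    · simp
    · rw [hr d hd]
      exact (hs.rank_lt_card d hd).trans (Nat.lt_succ_self _)
  · intro d hd
    rcases Finset.mem_insert.1 hd with rfl | hd
    · simp
    · rw [hK d hd]
      exact hs.time_le d hd
  · intro d hd e he hed
    rcases Finset.mem_insert.1 hd with rfl | hdD
    · rcases Finset.mem_insert.1 he with rfl | heD
      · exact le_rfl
      · rw [hK e heD, Function.update_self]
        exact hs.time_le e heD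
    · rcases Finset.mem_insert.1 he with rfl | heD
      · rw [hr d hdD, Function.update_self] at hed
        exact absurd (hs.rank_lt_card d hdD) hed.not_gt
      · rw [hK d hdD, hK e heD]
        rw [hr d hdD, hr e heD] at hed
        exact hs.time_le_of_rank_lt d hdD e heD hed
  · intro d hd p hp
    rcases Finset.mem_insert.1 hd with rfl | hd
    · rw [Function.update_self]
      exact List.mem_toFinset.1 (Finset.mem_filter.1 (hc.1 p hp)).1
    · rw [hK d hd]
      exact hs.mem_take_time d hd p hp
  · intro d hd q hq hqd hl hr'
    rcases Finset.mem_insert.1 hd with rfl | hd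
    · rw [Function.update_self] at hq
      by_cases hqD : S.f q ∈ D
      · rw [hr _ hqD, Function.update_self]
        exact ⟨Finset.mem_insert_of_mem hqD, hs.rank_lt_card _ hqD⟩
      · exact absurd (hc.2 q (Finset.mem_filter.2 ⟨List.mem_toFinset.2 hq, hqD⟩) hl hr') hqd
    · rw [hK d hd] at hq
      obtain ⟨hqD, hlt⟩ := hs.earlier_of_mem_span d hd q hq hqd hl hr'
      rw [hr _ hqD, hr d hd]
      exact ⟨Finset.mem_insert_of_mem hqD, hlt⟩

theorem reflTransGen [DecidableEq P] [DecidableEq C] (hs : IsDeletionSchedule S pts i D r K)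
    {B : Finset P} (h : Relation.ReflTransGen (sweepStep S)
      ((pts.take i).toFinset.filter fun p => S.f p ∉ D) B) :
    ∃ D' r' K', IsDeletionSchedule S pts i D' r' K' ∧
      B = (pts.take i).toFinset.filter fun p => S.f p ∉ D' := by
  induction h with
  | refl => exact ⟨D, r, K, hs, rfl⟩
  | tail _ hstep ih =>
    obtain ⟨D', r', K', hs', rfl⟩ := ih
    obtain ⟨c, hc, rfl⟩ := hstep
    refine ⟨insert c D', Function.update r' c D'.card, Function.update K' c i, hs'.delete hc, ?_⟩
    rw [Finset.filter_filter]
    simp only [Finset.mem_insert, not_or, and_comm]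

end IsDeletionSchedule

theorem List.length_takeWhile_le_of_imp {α : Type*} {Q Q' : α → Bool}
    (h : ∀ a, Q a → Q' a) (l : List α) : (l.takeWhile Q).length ≤ (l.takeWhile Q').length := by
  induction l with
  | nil => simp
  | cons a l ih =>
    by_cases ha : Q a
    · simp [ha, h a ha, ih]
    · simp [List.takeWhile_cons, ha]

noncomputable def timeBelow (S : CPS P C) (pts : List P) (t : ℝ) : ℕ :=
  (pts.takeWhile fun p => S.y p < t).length

section TimeBelow

variable {S : CPS P C} {pts : List P}

theorem timeBelow_le_length (t : ℝ) : timeBelow S pts t ≤ pts.length :=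
  (List.takeWhile_prefix _).length_le

theorem timeBelow_mono {s t : ℝ} (hst : s ≤ t) : timeBelow S pts s ≤ timeBelow S pts t :=
  List.length_takeWhile_le_of_imp
    (fun p hp => by simpa using (of_decide_eq_true hp).trans_le hst) pts

theorem mem_take_timeBelow_iff (hall : ∀ p : P, p ∈ pts)
    (hsort : pts.Pairwise fun p q => S.y p < S.y q) {t : ℝ} {p : P} :
    p ∈ pts.take (timeBelow S pts t) ↔ S.y p < t := by
  rw [timeBelow, ← List.prefix_iff_eq_take.1 (List.takeWhile_prefix _)]
  exact List.mem_takeWhile_iff_of_pairwise (hsort.imp fun hpq hq => hpq.trans hq) (hall p)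

end TimeBelow

section Sweep

variable [DecidableEq P] [DecidableEq C]

def IsSweep (S : CPS P C) (pts : List P) (L : ℕ → Finset P) : Prop :=
  ∀ (i : ℕ) (h : i < pts.length), reducesTo S (insert (pts.get ⟨i, h⟩) (L i)) (L (i + 1))

variable {S : CPS P C} {pts : List P} {L : ℕ → Finset P}

theorem reflTransGen_sweepStep_subset {A B : Finset P}
    (h : Relation.ReflTransGen (sweepStep S) A B) : B ⊆ A := by
  induction h with
  | refl => exact subset_rfl
  | tail _ hstep ih =>
    obtain ⟨c, -, rfl⟩ := hstep
    exact (Finset.filter_subset _ _).trans ih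

namespace IsSweep

theorem exists_schedule (hL : IsSweep S pts L) (hnd : pts.Nodup) (hL0 : L 0 = ∅) :
    ∀ i ≤ pts.length, ∃ D r K, IsDeletionSchedule S pts i D r K ∧
      L i = (pts.take i).toFinset.filter fun p => S.f p ∉ D := by
  intro i
  induction i with
  | zero =>
    intro _
    exact ⟨∅, fun _ => 0, fun _ => 0, ⟨by simp, by simp, by simp, by simp, by simp, by simp⟩,
      by simp [hL0]⟩
  | succ i ih =>
    intro hi
    obtain ⟨D, r, K, hs, hLi⟩ := ih (Nat.le_of_succ_le hi)
    have h := (hL i hi).1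
    rw [hLi, List.get_eq_getElem, hs.insert_filter_take hnd hi] at h
    exact (hs.mono i.le_succ).reflTransGen h

theorem subset_take (hL : IsSweep S pts L) (hnd : pts.Nodup) (hL0 : L 0 = ∅) {i : ℕ}
    (hi : i ≤ pts.length) : L i ⊆ (pts.take i).toFinset := by
  obtain ⟨D, r, K, -, hLi⟩ := hL.exists_schedule hnd hL0 i hi
  exact hLi ▸ Finset.filter_subset _ _

theorem mem_of_color_eq (hL : IsSweep S pts L) (hnd : pts.Nodup) (hL0 : L 0 = ∅) {i : ℕ}
    (hi : i ≤ pts.length) {p q : P} (hp : p ∈ pts.take i) (hq : q ∈ L i)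
    (hpq : S.f p = S.f q) : p ∈ L i := by
  obtain ⟨D, r, K, -, hLi⟩ := hL.exists_schedule hnd hL0 i hi
  rw [hLi, Finset.mem_filter] at hq ⊢
  exact ⟨List.mem_toFinset.2 hp, hpq ▸ hq.2⟩

theorem notMem_of_le (hL : IsSweep S pts L) (hnd : pts.Nodup) {p : P} {i j : ℕ}
    (hp : p ∈ pts.take i) (hpi : p ∉ L i) (hij : i ≤ j) (hj : j ≤ pts.length) : p ∉ L j := by
  induction j, hij using Nat.le_induction with
  | base => exact hpi
  | succ j hij ih =>
    have hjn : j < pts.length := hj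
    intro hpL
    rcases Finset.mem_insert.1 (reflTransGen_sweepStep_subset (hL j hjn).1 hpL) with rfl | hpL
    · exact hnd.getElem_notMem_take hjn (List.take_subset_take_left pts hij hp)
    · exact ih hjn.le hpL

theorem reduced (hL : IsSweep S pts L) {i : ℕ} (h0 : 0 < i) (hi : i ≤ pts.length) :
    sweepReduced S (L i) := by
  obtain ⟨j, rfl⟩ := Nat.exists_eq_succ_of_ne_zero h0.ne'
  exact (hL j hi).2

end IsSweep

end Sweep

namespace IsDeletionSchedule

variable {S : CPS P C} {pts : List P} {i : ℕ} {r K : C → ℕ}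

theorem exists_heights (hs : IsDeletionSchedule S pts i Finset.univ r K)
    (hall : ∀ p : P, p ∈ pts) (hsort : pts.Pairwise fun p q => S.y p < S.y q) :
    ∃ Y : C → ℝ, (∀ c, ∀ p ∈ pts.take (K c), S.y p < Y c) ∧
      (∀ c p, p ∉ pts.take (K c) → Y c < S.y p) ∧ ∀ c d, r c < r d → Y c < Y d := by
  classical
  have hne : ∀ c, ((pts.take (K c)).toFinset.image S.y).Nonempty := fun c => by
    obtain ⟨p, rfl⟩ := S.f_surj c
    exact ⟨_, Finset.mem_image_of_mem _
      (List.mem_toFinset.2 (hs.mem_take_time _ (Finset.mem_univ _) p rfl))⟩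
  let b : C → ℝ := fun c => ((pts.take (K c)).toFinset.image S.y).max' (hne c)
  have hb_le : ∀ c, ∀ p ∈ pts.take (K c), S.y p ≤ b c := fun c p hp =>
    Finset.le_max' _ _ (Finset.mem_image_of_mem _ (List.mem_toFinset.2 hp))
  have hb_mem : ∀ c, ∃ p ∈ pts.take (K c), S.y p = b c := fun c => by
    obtain ⟨p, hp, hb⟩ := Finset.mem_image.1 (Finset.max'_mem _ (hne c))
    exact ⟨p, List.mem_toFinset.1 hp, hb⟩
  have hb_lt : ∀ c p, p ∉ pts.take (K c) → b c < S.y p := fun c p hp => by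
    obtain ⟨p', hp', hb⟩ := hb_mem c
    exact hb ▸ hsort.rel_of_mem_take_of_mem_drop hp'
      (List.mem_drop_of_mem_of_notMem_take (hall p) hp)
  have hb_mono : ∀ c d, r c < r d → b c ≤ b d := fun c d hcd => by
    obtain ⟨p, hp, hb⟩ := hb_mem c
    exact hb ▸ hb_le d p (List.take_subset_take_left pts
      (hs.time_le_of_rank_lt d (Finset.mem_univ _) c (Finset.mem_univ _) hcd) hp)
  obtain ⟨Y, hbY, hYT, hYr⟩ := exists_heights_between (Finset.univ.image S.y) b
    (fun c => by
      obtain ⟨p, -, hb⟩ := hb_mem c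
      exact hb ▸ Finset.mem_image_of_mem _ (Finset.mem_univ p))
    r hb_mono
  exact ⟨Y, fun c p hp => (hb_le c p hp).trans_lt (hbY c),
    fun c p hp => hYT c _ (Finset.mem_image_of_mem _ (Finset.mem_univ _)) (hb_lt c p hp), hYr⟩

theorem exists_planarBus (hs : IsDeletionSchedule S pts i Finset.univ r K)
    (hall : ∀ p : P, p ∈ pts) (hsort : pts.Pairwise fun p q => S.y p < S.y q) :
    ∃ Y : C → ℝ, Function.Injective Y ∧ PlanarBus S Y ∧ ∀ p : P, S.y p < Y (S.f p) := by
  obtain ⟨Y, hbelow, habove, hYr⟩ := hs.exists_heights hall hsort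
  have hY : ∀ p, S.y p < Y (S.f p) := fun p =>
    hbelow _ p (hs.mem_take_time _ (Finset.mem_univ _) p rfl)
  refine ⟨Y, fun c d hcd => ?_, ⟨?_, ?_, ?_⟩, hY⟩
  · rcases lt_trichotomy (r c) (r d) with h | h | h
    · exact absurd hcd (hYr c d h).ne
    · exact hs.injOn_rank (by simp) (by simp) h
    · exact absurd hcd (hYr d c h).ne'
  · rintro c p - ⟨hpY, -⟩
    by_cases hp : p ∈ pts.take (K c)
    · exact (hbelow c p hp).ne hpY
    · exact (habove c p hp).ne' hpY
  · intro c q hqc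
    rw [Set.disjoint_left]
    rintro z ⟨hzY, hzl, hzr⟩ ⟨hzx, hz⟩
    rw [Set.uIcc_of_le (hY q).le, hzY] at hz
    rw [hzx] at hzl hzr
    by_cases hq : q ∈ pts.take (K c)
    · have hlt := (hs.earlier_of_mem_span c (Finset.mem_univ _) q hq hqc hzl hzr).2
      exact (hYr _ _ hlt).not_ge hz.2
    · exact (habove c q hq).not_ge hz.1
  · intro p q hpq
    rw [Set.disjoint_left]
    rintro z ⟨hzp, -⟩ ⟨hzq, -⟩
    exact hpq (congrArg S.f (S.x_inj (hzp.symm.trans hzq)))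

end IsDeletionSchedule

/-- Color `c` is still present when the sweep reaches the height of its bus. -/
def Survives (S : CPS P C) (pts : List P) (L : ℕ → Finset P) (Y : C → ℝ) (c : C) : Prop :=
  ∀ p, S.f p = c → p ∈ L (timeBelow S pts (Y c))

namespace IsSweep

variable [DecidableEq P] [DecidableEq C] {S : CPS P C} {pts : List P} {L : ℕ → Finset P}

theorem exists_survives_lt (hL : IsSweep S pts L) (hnd : pts.Nodup) (hall : ∀ p : P, p ∈ pts)
    (hsort : pts.Pairwise fun p q => S.y p < S.y q) (hL0 : L 0 = ∅) {Y : C → ℝ}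
    (hPB : PlanarBus S Y) (hY : ∀ p, S.y p < Y (S.f p)) {c : C} (hc : Survives S pts L Y c) :
    ∃ d, Survives S pts L Y d ∧ Y d < Y c := by
  set s := timeBelow S pts (Y c)
  have hs : s ≤ pts.length := timeBelow_le_length _
  have hs0 : 0 < s := by
    obtain ⟨p, rfl⟩ := S.f_surj c
    refine Nat.pos_of_ne_zero fun h0 => ?_
    have := hL.subset_take hnd hL0 hs (hc p rfl)
    simp [h0] at this
  obtain ⟨q, hqL, hxl, hxr, hqc⟩ : ∃ q ∈ L s, xl S c ≤ S.x q ∧ S.x q ≤ xr S c ∧ S.f q ≠ c := by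
    by_contra! h
    exact hL.reduced hs0 hs c ⟨hc, h⟩
  have hqs : q ∈ pts.take s := List.mem_toFinset.1 (hL.subset_take hnd hL0 hs hqL)
  have hyq : S.y q < Y c := (mem_take_timeBelow_iff hall hsort).1 hqs
  have hYq : Y (S.f q) < Y c := by
    by_contra! hle
    exact Set.disjoint_left.1 (hPB.2.1 c q hqc) (show (S.x q, Y c) ∈ busSeg S Y c from
      ⟨rfl, hxl, hxr⟩) ⟨rfl, Set.mem_uIcc.2 (Or.inl ⟨hyq.le, hle⟩)⟩
  refine ⟨S.f q, fun p hp => ?_, hYq⟩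
  have hpq : p ∈ pts.take (timeBelow S pts (Y (S.f q))) :=
    (mem_take_timeBelow_iff hall hsort).2 (hp ▸ hY p)
  have hps : p ∈ L s := hL.mem_of_color_eq hnd hL0 hs
    ((mem_take_timeBelow_iff hall hsort).2 ((hp ▸ hY p).trans hYq)) hqL hp
  by_contra hp'
  exact hL.notMem_of_le hnd hpq hp' (timeBelow_mono hYq.le) hs hps

theorem eq_empty_of_planarBus (hL : IsSweep S pts L) (hnd : pts.Nodup)
    (hall : ∀ p : P, p ∈ pts) (hsort : pts.Pairwise fun p q => S.y p < S.y q) (hL0 : L 0 = ∅)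
    {Y : C → ℝ} (hPB : PlanarBus S Y) (hY : ∀ p, S.y p < Y (S.f p)) :
    L pts.length = ∅ := by
  by_contra hne
  obtain ⟨p₀, hp₀⟩ := Finset.nonempty_iff_ne_empty.2 hne
  have hsurv : Survives S pts L Y (S.f p₀) := fun p hp => by
    have hpn : p ∈ L pts.length :=
      hL.mem_of_color_eq hnd hL0 le_rfl (by rw [List.take_length]; exact hall p) hp₀ hp
    by_contra hpt
    exact hL.notMem_of_le hnd ((mem_take_timeBelow_iff hall hsort).2 (hp ▸ hY p)) hpt
      (timeBelow_le_length _) le_rfl hpn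
  have : Nonempty {c // Survives S pts L Y c} := ⟨⟨_, hsurv⟩⟩
  obtain ⟨⟨c, hc⟩, hmin⟩ := Finite.exists_min fun c : {c // Survives S pts L Y c} => Y c
  obtain ⟨d, hd, hdc⟩ := hL.exists_survives_lt hnd hall hsort hL0 hPB hY hc
  exact (hmin ⟨d, hd⟩).not_gt hdc

theorem exists_planarBus_of_eq_empty (hL : IsSweep S pts L) (hnd : pts.Nodup)
    (hall : ∀ p : P, p ∈ pts) (hsort : pts.Pairwise fun p q => S.y p < S.y q) (hL0 : L 0 = ∅)
    (hLn : L pts.length = ∅) :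
    ∃ Y : C → ℝ, Function.Injective Y ∧ PlanarBus S Y ∧ ∀ p : P, S.y p < Y (S.f p) := by
  obtain ⟨D, r, K, hs, hLD⟩ := hL.exists_schedule hnd hL0 _ le_rfl
  have hD : D = Finset.univ := Finset.eq_univ_of_forall fun c => by
    obtain ⟨p, rfl⟩ := S.f_surj c
    by_contra hc
    have hp : p ∈ L pts.length := by simp [hLD, hall p, hc]
    simp [hLn] at hp
  exact (hD ▸ hs).exists_planarBus hall hsort

end IsSweep

/-- the sweep process (insert the points in increasing y-order and
repeatedly delete complete consecutive color blocks) ends with an empty list iff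
the point set admits a planar bus realization consisting only of ⊓-buses. -/
theorem stmt5 {P C : Type} [Fintype P] [Fintype C] [DecidableEq P] [DecidableEq C]
    (S : CPS P C) (pts : List P) (hnd : pts.Nodup) (hall : ∀ p : P, p ∈ pts)
    (hsort : pts.Pairwise (fun p q => S.y p < S.y q))
    (L : ℕ → Finset P) (hL0 : L 0 = ∅)
    (hLstep : ∀ (i : ℕ) (h : i < pts.length),
      reducesTo S (insert (pts.get ⟨i, h⟩) (L i)) (L (i + 1))) :
    (∃ Y : C → ℝ, Function.Injective Y ∧ PlanarBus S Y ∧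
      ∀ p : P, S.y p < Y (S.f p)) ↔ L pts.length = ∅ := by
  have hL : IsSweep S pts L := hLstep
  exact ⟨fun ⟨_, _, hPB, hY⟩ => hL.eq_empty_of_planarBus hnd hall hsort hL0 hPB hY,
    hL.exists_planarBus_of_eq_empty hnd hall hsort hL0⟩
end

section
/- Let c and c′ be two colors of a colored point set, each with exactly two points: p, q of color c and p′, q′ of color c′, whose x-coordinates interleave as x(p) < x(p′) < x(q) < x(q′). In every planar bus realization in which the buses of c and c′ are both ⊓-buses: if y(c) < y(c′) then y(c) < y(p′), and if y(c′) < y(c) then y(c′) < y(q). -/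
open Set

variable {P C : Type} [Fintype P] [Fintype C]

lemma xl_le {P C : Type} [Fintype P] [Fintype C] (S : CPS P C) {c : C} {r : P}
    (h : S.f r = c) : xl S c ≤ S.x r :=
  csInf_le (Set.Finite.bddBelow (Set.toFinite _)) ⟨r, h, rfl⟩

lemma le_xr {P C : Type} [Fintype P] [Fintype C] (S : CPS P C) {c : C} {r : P}
    (h : S.f r = c) : S.x r ≤ xr S c :=
  le_csSup (Set.Finite.bddAbove (Set.toFinite _)) ⟨r, h, rfl⟩

/-- two interleaving colors with two points each; in every planar
bus realization in which both buses are ⊓-buses, the lower of the two buses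
stays below the interleaved point of the other color. -/
theorem stmt7 {P C : Type} [Fintype P] [Fintype C] (S : CPS P C)
    (c c' : C) (hcc : c ≠ c')
    (p q p' q' : P)
    (hfp : S.f p = c) (hfq : S.f q = c) (hfp' : S.f p' = c') (hfq' : S.f q' = c')
    (hc2 : ∀ r : P, S.f r = c → r = p ∨ r = q)
    (hc'2 : ∀ r : P, S.f r = c' → r = p' ∨ r = q')
    (hx1 : S.x p < S.x p') (hx2 : S.x p' < S.x q) (hx3 : S.x q < S.x q')
    (Y : C → ℝ) (hY : Function.Injective Y) (hpl : PlanarBus S Y)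
    (htopc : ∀ r : P, S.f r = c → S.y r < Y c)
    (htopc' : ∀ r : P, S.f r = c' → S.y r < Y c') :
    (Y c < Y c' → Y c < S.y p') ∧ (Y c' < Y c → Y c' < S.y q) := by
  constructor
  · intro hlt
    by_contra hcon
    push_neg at hcon
    have hd := hpl.2.1 c p' (by rw [hfp']; exact hcc.symm)
    have h1 : ((S.x p', Y c) : ℝ × ℝ) ∈ busSeg S Y c :=
      ⟨rfl, ⟨le_trans (xl_le S hfp) hx1.le, le_trans hx2.le (le_xr S hfq)⟩⟩
    have h2 : ((S.x p', Y c) : ℝ × ℝ) ∈ connSeg S Y p' := by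
      refine ⟨rfl, Set.mem_uIcc.mpr (Or.inl ⟨hcon, ?_⟩)⟩
      rw [hfp']; exact hlt.le
    exact Set.disjoint_left.mp hd h1 h2
  · intro hlt
    by_contra hcon
    push_neg at hcon
    have hd := hpl.2.1 c' q (by rw [hfq]; exact hcc)
    have h1 : ((S.x q, Y c') : ℝ × ℝ) ∈ busSeg S Y c' :=
      ⟨rfl, ⟨le_trans (xl_le S hfp') hx2.le, le_trans hx3.le (le_xr S hfq')⟩⟩
    have h2 : ((S.x q, Y c') : ℝ × ℝ) ∈ connSeg S Y q := by
      refine ⟨rfl, Set.mem_uIcc.mpr (Or.inl ⟨hcon, ?_⟩)⟩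
      rw [hfq]; exact hlt.le
    exact Set.disjoint_left.mp hd h1 h2
end

section
/- Let c and c′ be two colors of a colored point set, each with exactly two points: p, q of color c and p′, q′ of color c′, with c′ nested inside the span of c: x(p) < x(p′) < x(q′) < x(q). In every planar bus realization in which the buses of c and c′ are both ⊓-buses: if y(c) < y(c′) then y(c) < min(y(p′), y(q′)), i.e., the outer bus is either above the inner bus or below both inner points. -/
open Set

variable {P C : Type} [Fintype P] [Fintype C]

/-- two colors with two points each, `c'` nested inside the span of
`c`; in every planar bus realization in which both buses are ⊓-buses, if the
outer bus is below the inner bus then it is below both inner points. -/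
theorem stmt8 {P C : Type} [Fintype P] [Fintype C] (S : CPS P C)
    (c c' : C) (hcc : c ≠ c')
    (p q p' q' : P)
    (hfp : S.f p = c) (hfq : S.f q = c) (hfp' : S.f p' = c') (hfq' : S.f q' = c')
    (hc2 : ∀ r : P, S.f r = c → r = p ∨ r = q)
    (hc'2 : ∀ r : P, S.f r = c' → r = p' ∨ r = q')
    (hx1 : S.x p < S.x p') (hx2 : S.x p' < S.x q') (hx3 : S.x q' < S.x q)
    (Y : C → ℝ) (hY : Function.Injective Y) (hpl : PlanarBus S Y)
    (htopc : ∀ r : P, S.f r = c → S.y r < Y c)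
    (htopc' : ∀ r : P, S.f r = c' → S.y r < Y c') :
    Y c < Y c' → Y c < min (S.y p') (S.y q') := by
  intro hlt
  have hset : S.x '' {r | S.f r = c} = {S.x p, S.x q} := by
    ext a
    constructor
    · rintro ⟨r, hr, rfl⟩
      rcases hc2 r hr with rfl | rfl
      · exact Or.inl rfl
      · exact Or.inr rfl
    · rintro (rfl | rfl)
      · exact ⟨p, hfp, rfl⟩
      · exact ⟨q, hfq, rfl⟩
  have hpq : S.x p < S.x q := by linarith
  have hxl : xl S c = S.x p := by
    rw [xl, hset, csInf_pair]
    exact min_eq_left hpq.le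
  have hxr : xr S c = S.x q := by
    rw [xr, hset, csSup_pair]
    exact max_eq_right hpq.le
  have key : ∀ r : P, S.f r = c' → S.x p < S.x r → S.x r < S.x q → Y c < S.y r := by
    intro r hr hl hrq
    by_contra hge
    push_neg at hge
    have hdisj := hpl.2.1 c r (by rw [hr]; exact fun h => hcc h.symm)
    have hmem : (S.x r, Y c) ∈ busSeg S Y c := by
      refine ⟨rfl, ?_⟩
      rw [hxl, hxr]
      exact ⟨hl.le, hrq.le⟩
    have hmem' : (S.x r, Y c) ∈ connSeg S Y r := by
      refine ⟨rfl, ?_⟩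
      rw [hr]
      exact Set.mem_uIcc.mpr (Or.inl ⟨hge, hlt.le⟩)
    exact hdisj.ne_of_mem hmem hmem' rfl
  rw [lt_min_iff]
  exact ⟨key p' hfp' hx1 (by linarith), key q' hfq' (by linarith) hx3⟩
end

section
/- Let a colored point set contain colors c and c′, each with exactly two points: c has points (x1, y1) and (x2, y2) with x1 < x2 and y1 < y2 (bottom-left/top-right), and c′ has points (x1′, y2′) and (x2′, y1′) with x1′ < x2′ and y1′ < y2′ (top-left/bottom-right). Suppose x1 < x1′ < x2′ < x2 and y1 < y1′ < y2 < y2′, i.e., the enclosing rectangle of c′ intersects only the top boundary of the enclosing rectangle of c. Then in every planar (⌐,⌙)-realization, the bus of c is a ⌙-bus. -/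
open Set

variable {P C : Type} [Fintype P] [Fintype C]

/-- A ⌐-bus: the bus height equals the maximum y-coordinate of its points. -/
noncomputable def isTopBus (S : CPS P C) (Y : C → ℝ) (c : C) : Prop :=
  Y c = sSup (S.y '' {p | S.f p = c})

/-- A ⌙-bus: the bus height equals the minimum y-coordinate of its points. -/
noncomputable def isBotBus (S : CPS P C) (Y : C → ℝ) (c : C) : Prop :=
  Y c = sInf (S.y '' {p | S.f p = c})

/-- case (1a): `c` ascending, `c'` descending, the rectangle of
`c'` intersects only the top boundary of the rectangle of `c`; then in every
planar (⌐,⌙)-realization the bus of `c` is a ⌙-bus. -/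
theorem stmt9 {P C : Type} [Fintype P] [Fintype C] (S : CPS P C)
    (c c' : C) (hcc : c ≠ c')
    (p1 p2 q1 q2 : P)
    (hfp1 : S.f p1 = c) (hfp2 : S.f p2 = c) (hfq1 : S.f q1 = c') (hfq2 : S.f q2 = c')
    (hc2 : ∀ r : P, S.f r = c → r = p1 ∨ r = p2)
    (hc'2 : ∀ r : P, S.f r = c' → r = q1 ∨ r = q2)
    (x1 x2 y1 y2 x1' x2' y1' y2' : ℝ)
    (hp1 : S.x p1 = x1 ∧ S.y p1 = y1) (hp2 : S.x p2 = x2 ∧ S.y p2 = y2)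
    (hq1 : S.x q1 = x1' ∧ S.y q1 = y2') (hq2 : S.x q2 = x2' ∧ S.y q2 = y1')
    (hxc : x1 < x2) (hyc : y1 < y2) (hxc' : x1' < x2') (hyc' : y1' < y2')
    (hx1 : x1 < x1') (hx2 : x2' < x2)
    (hy1 : y1 < y1') (hy2 : y1' < y2) (hy3 : y2 < y2')
    (Y : C → ℝ) (hY : Function.Injective Y) (hpl : PlanarBus S Y)
    (htb : ∀ c₀ : C, isTopBus S Y c₀ ∨ isBotBus S Y c₀) :
    isBotBus S Y c := by
  obtain ⟨hx1p, hy1p⟩ := hp1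
  obtain ⟨hx2p, hy2p⟩ := hp2
  obtain ⟨hx1q, hy2q⟩ := hq1
  obtain ⟨hx2q, hy1q⟩ := hq2
  have himc : S.y '' {p | S.f p = c} = {y1, y2} := by
    ext v
    simp only [Set.mem_image, Set.mem_setOf_eq, Set.mem_insert_iff, Set.mem_singleton_iff]
    constructor
    · rintro ⟨r, hr, rfl⟩
      rcases hc2 r hr with rfl | rfl
      · left; exact hy1p
      · right; exact hy2p
    · rintro (rfl | rfl)
      · exact ⟨p1, hfp1, hy1p⟩
      · exact ⟨p2, hfp2, hy2p⟩
  have hximc : S.x '' {p | S.f p = c} = {x1, x2} := by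
    ext v
    simp only [Set.mem_image, Set.mem_setOf_eq, Set.mem_insert_iff, Set.mem_singleton_iff]
    constructor
    · rintro ⟨r, hr, rfl⟩
      rcases hc2 r hr with rfl | rfl
      · left; exact hx1p
      · right; exact hx2p
    · rintro (rfl | rfl)
      · exact ⟨p1, hfp1, hx1p⟩
      · exact ⟨p2, hfp2, hx2p⟩
  have himc' : S.y '' {p | S.f p = c'} = {y2', y1'} := by
    ext v
    simp only [Set.mem_image, Set.mem_setOf_eq, Set.mem_insert_iff, Set.mem_singleton_iff]
    constructor
    · rintro ⟨r, hr, rfl⟩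
      rcases hc'2 r hr with rfl | rfl
      · left; exact hy2q
      · right; exact hy1q
    · rintro (rfl | rfl)
      · exact ⟨q1, hfq1, hy2q⟩
      · exact ⟨q2, hfq2, hy1q⟩
  have hxl : xl S c = x1 := by
    rw [xl, hximc, csInf_pair]; exact inf_eq_left.mpr hxc.le
  have hxr : xr S c = x2 := by
    rw [xr, hximc, csSup_pair]; exact sup_eq_right.mpr hxc.le
  rcases htb c with htop | hbot
  · exfalso
    have hYc : Y c = y2 := by
      rw [isTopBus, himc, csSup_pair] at htop
      rw [htop]; exact sup_eq_right.mpr hyc.le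
    rcases htb c' with ht' | hb'
    · have hYc' : Y c' = y2' := by
        rw [isTopBus, himc', csSup_pair] at ht'
        rw [ht']; exact sup_eq_left.mpr hyc'.le
      have hdisj := hpl.2.1 c q2 (by rw [hfq2]; exact hcc.symm)
      have hmem1 : ((x2', y2) : ℝ × ℝ) ∈ busSeg S Y c :=
        ⟨hYc.symm, by rw [hxl, hxr]; exact ⟨(hx1.trans hxc').le, hx2.le⟩⟩
      have hmem2 : ((x2', y2) : ℝ × ℝ) ∈ connSeg S Y q2 := by
        refine ⟨hx2q.symm, ?_⟩
        rw [hy1q, hfq2, hYc', Set.uIcc_of_le hyc'.le]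
        exact ⟨(hy2.le), hy3.le⟩
      exact Set.disjoint_left.mp hdisj hmem1 hmem2
    · have hYc' : Y c' = y1' := by
        rw [isBotBus, himc', csInf_pair] at hb'
        rw [hb']; exact inf_eq_right.mpr hyc'.le
      have hdisj := hpl.2.1 c q1 (by rw [hfq1]; exact hcc.symm)
      have hmem1 : ((x1', y2) : ℝ × ℝ) ∈ busSeg S Y c :=
        ⟨hYc.symm, by rw [hxl, hxr]; exact ⟨hx1.le, (hxc'.trans hx2).le⟩⟩
      have hmem2 : ((x1', y2) : ℝ × ℝ) ∈ connSeg S Y q1 := by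
        refine ⟨hx1q.symm, ?_⟩
        rw [hy2q, hfq1, hYc', Set.uIcc_comm, Set.uIcc_of_le hyc'.le]
        exact ⟨hy2.le, hy3.le⟩
      exact Set.disjoint_left.mp hdisj hmem1 hmem2
  · exact hbot
end

section
/- Let a colored point set contain colors c and c′, each with exactly two points: c has points (x1, y1) and (x2, y2) with x1 < x2 and y1 < y2 (bottom-left/top-right), and c′ has points (x1′, y2′) and (x2′, y1′) with x1′ < x2′ and y1′ < y2′ (top-left/bottom-right). Suppose x1 < x1′ < x2 < x2′ and y1 < y1′ < y2 < y2′, i.e., the enclosing rectangle of c′ contains the top-right corner of the enclosing rectangle of c. Then in every planar (⌐,⌙)-realization, the bus of c′ is a ⌐-bus. -/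
open Set

variable {P C : Type} [Fintype P] [Fintype C]

/-- case (1e): `c` ascending, `c'` descending, the rectangle of
`c'` contains the top-right corner of the rectangle of `c`; then in every planar
(⌐,⌙)-realization the bus of `c'` is a ⌐-bus. -/
theorem stmt10 {P C : Type} [Fintype P] [Fintype C] (S : CPS P C)
    (c c' : C) (hcc : c ≠ c')
    (p1 p2 q1 q2 : P)
    (hfp1 : S.f p1 = c) (hfp2 : S.f p2 = c) (hfq1 : S.f q1 = c') (hfq2 : S.f q2 = c')
    (hc2 : ∀ r : P, S.f r = c → r = p1 ∨ r = p2)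
    (hc'2 : ∀ r : P, S.f r = c' → r = q1 ∨ r = q2)
    (x1 x2 y1 y2 x1' x2' y1' y2' : ℝ)
    (hp1 : S.x p1 = x1 ∧ S.y p1 = y1) (hp2 : S.x p2 = x2 ∧ S.y p2 = y2)
    (hq1 : S.x q1 = x1' ∧ S.y q1 = y2') (hq2 : S.x q2 = x2' ∧ S.y q2 = y1')
    (hxc : x1 < x2) (hyc : y1 < y2) (hxc' : x1' < x2') (hyc' : y1' < y2')
    (hx1 : x1 < x1') (hx2 : x1' < x2) (hx3 : x2 < x2')
    (hy1 : y1 < y1') (hy2 : y1' < y2) (hy3 : y2 < y2')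
    (Y : C → ℝ) (hY : Function.Injective Y) (hpl : PlanarBus S Y)
    (htb : ∀ c₀ : C, isTopBus S Y c₀ ∨ isBotBus S Y c₀) :
    isTopBus S Y c' := by
  obtain ⟨hxp1, hyp1⟩ := hp1
  obtain ⟨hxp2, hyp2⟩ := hp2
  obtain ⟨hxq1, hyq1⟩ := hq1
  obtain ⟨hxq2, hyq2⟩ := hq2
  have himgxc : S.x '' {p | S.f p = c} = {x1, x2} := by
    ext t
    simp only [Set.mem_image, Set.mem_setOf_eq, Set.mem_insert_iff, Set.mem_singleton_iff]
    constructor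
    · rintro ⟨r, hr, rfl⟩
      rcases hc2 r hr with rfl | rfl
      · exact Or.inl hxp1
      · exact Or.inr hxp2
    · rintro (rfl | rfl)
      exacts [⟨p1, hfp1, hxp1⟩, ⟨p2, hfp2, hxp2⟩]
  have himgxc' : S.x '' {p | S.f p = c'} = {x1', x2'} := by
    ext t
    simp only [Set.mem_image, Set.mem_setOf_eq, Set.mem_insert_iff, Set.mem_singleton_iff]
    constructor
    · rintro ⟨r, hr, rfl⟩
      rcases hc'2 r hr with rfl | rfl
      · exact Or.inl hxq1
      · exact Or.inr hxq2
    · rintro (rfl | rfl)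
      exacts [⟨q1, hfq1, hxq1⟩, ⟨q2, hfq2, hxq2⟩]
  have himgyc : S.y '' {p | S.f p = c} = {y1, y2} := by
    ext t
    simp only [Set.mem_image, Set.mem_setOf_eq, Set.mem_insert_iff, Set.mem_singleton_iff]
    constructor
    · rintro ⟨r, hr, rfl⟩
      rcases hc2 r hr with rfl | rfl
      · exact Or.inl hyp1
      · exact Or.inr hyp2
    · rintro (rfl | rfl)
      exacts [⟨p1, hfp1, hyp1⟩, ⟨p2, hfp2, hyp2⟩]
  have himgyc' : S.y '' {p | S.f p = c'} = {y2', y1'} := by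
    ext t
    simp only [Set.mem_image, Set.mem_setOf_eq, Set.mem_insert_iff, Set.mem_singleton_iff]
    constructor
    · rintro ⟨r, hr, rfl⟩
      rcases hc'2 r hr with rfl | rfl
      · exact Or.inl hyq1
      · exact Or.inr hyq2
    · rintro (rfl | rfl)
      exacts [⟨q1, hfq1, hyq1⟩, ⟨q2, hfq2, hyq2⟩]
  have hxlc : xl S c = x1 := by
    rw [xl, himgxc, csInf_pair]; exact min_eq_left hxc.le
  have hxrc : xr S c = x2 := by
    rw [xr, himgxc, csSup_pair]; exact max_eq_right hxc.le
  have hxlc' : xl S c' = x1' := by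
    rw [xl, himgxc', csInf_pair]; exact min_eq_left hxc'.le
  have hxrc' : xr S c' = x2' := by
    rw [xr, himgxc', csSup_pair]; exact max_eq_right hxc'.le
  rcases htb c' with h | h
  · exact h
  · -- c' is a bot bus : Y c' = y1'
    exfalso
    have hYc' : Y c' = y1' := by
      rw [isBotBus, himgyc', csInf_pair] at h
      rw [h]; exact min_eq_right hyc'.le
    rcases htb c with hc | hc
    · -- c top: Y c = y2; point (x1', y2) on bus of c and conn of q1
      have hYc : Y c = y2 := by
        rw [isTopBus, himgyc, csSup_pair] at hc
        rw [hc]; exact max_eq_right hyc.le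
      have hne : S.f q1 ≠ c := by rw [hfq1]; exact Ne.symm hcc
      refine Set.not_disjoint_iff.mpr ⟨(x1', y2), ?_, ?_⟩ (hpl.2.1 c q1 hne)
      · exact ⟨hYc.symm, by rw [hxlc, hxrc]; exact ⟨hx1.le, hx2.le⟩⟩
      · refine ⟨hxq1.symm, ?_⟩
        rw [hyq1, hfq1, hYc', Set.uIcc_of_ge hyc'.le]
        exact ⟨hy2.le, hy3.le⟩
    · -- c bot: Y c = y1; point (x2, y1') on bus of c' and conn of p2
      have hYc : Y c = y1 := by
        rw [isBotBus, himgyc, csInf_pair] at hc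
        rw [hc]; exact min_eq_left hyc.le
      have hne : S.f p2 ≠ c' := by rw [hfp2]; exact hcc
      refine Set.not_disjoint_iff.mpr ⟨(x2, y1'), ?_, ?_⟩ (hpl.2.1 c' p2 hne)
      · exact ⟨hYc'.symm, by rw [hxlc', hxrc']; exact ⟨hx2.le, hx3.le⟩⟩
      · refine ⟨hxp2.symm, ?_⟩
        rw [hyp2, hfp2, hYc, Set.uIcc_of_ge hyc.le]
        exact ⟨hy1.le, hy2.le⟩
end

section
/- Let a colored point set contain colors c and c′, each with exactly two points: c has points (x1, y1) and (x2, y2) with x1 < x2 and y1 < y2 (bottom-left/top-right), and c′ has points (x1′, y2′) and (x2′, y1′) with x1′ < x2′ and y1′ < y2′ (top-left/bottom-right). Suppose x1′ < x1 < x2′ < x2 and y1′ < y1 < y2′ < y2, i.e., the enclosing rectangle of c′ contains the bottom-left corner of the enclosing rectangle of c. Then in every planar (⌐,⌙)-realization, the bus of c′ is a ⌙-bus. -/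
open Set

variable {P C : Type} [Fintype P] [Fintype C]

/-- case (1h): `c` ascending, `c'` descending, the rectangle of
`c'` contains the bottom-left corner of the rectangle of `c`; then in every
planar (⌐,⌙)-realization the bus of `c'` is a ⌙-bus. -/
theorem stmt11 {P C : Type} [Fintype P] [Fintype C] (S : CPS P C)
    (c c' : C) (hcc : c ≠ c')
    (p1 p2 q1 q2 : P)
    (hfp1 : S.f p1 = c) (hfp2 : S.f p2 = c) (hfq1 : S.f q1 = c') (hfq2 : S.f q2 = c')
    (hc2 : ∀ r : P, S.f r = c → r = p1 ∨ r = p2)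
    (hc'2 : ∀ r : P, S.f r = c' → r = q1 ∨ r = q2)
    (x1 x2 y1 y2 x1' x2' y1' y2' : ℝ)
    (hp1 : S.x p1 = x1 ∧ S.y p1 = y1) (hp2 : S.x p2 = x2 ∧ S.y p2 = y2)
    (hq1 : S.x q1 = x1' ∧ S.y q1 = y2') (hq2 : S.x q2 = x2' ∧ S.y q2 = y1')
    (hxc : x1 < x2) (hyc : y1 < y2) (hxc' : x1' < x2') (hyc' : y1' < y2')
    (hx1 : x1' < x1) (hx2 : x1 < x2') (hx3 : x2' < x2)
    (hy1 : y1' < y1) (hy2 : y1 < y2') (hy3 : y2' < y2)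
    (Y : C → ℝ) (hY : Function.Injective Y) (hpl : PlanarBus S Y)
    (htb : ∀ c₀ : C, isTopBus S Y c₀ ∨ isBotBus S Y c₀) :
    isBotBus S Y c' := by
  have hset_c : {p | S.f p = c} = ({p1, p2} : Set P) := by
    ext r
    simp only [Set.mem_setOf_eq, Set.mem_insert_iff, Set.mem_singleton_iff]
    exact ⟨hc2 r, by rintro (rfl | rfl) <;> assumption⟩
  have hset_c' : {p | S.f p = c'} = ({q1, q2} : Set P) := by
    ext r
    simp only [Set.mem_setOf_eq, Set.mem_insert_iff, Set.mem_singleton_iff]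
    exact ⟨hc'2 r, by rintro (rfl | rfl) <;> assumption⟩
  have hxl_c : xl S c = x1 := by
    rw [xl, hset_c, Set.image_pair, hp1.1, hp2.1, csInf_pair]
    exact min_eq_left hxc.le
  have hxr_c : xr S c = x2 := by
    rw [xr, hset_c, Set.image_pair, hp1.1, hp2.1, csSup_pair]
    exact max_eq_right hxc.le
  have hxl_c' : xl S c' = x1' := by
    rw [xl, hset_c', Set.image_pair, hq1.1, hq2.1, csInf_pair]
    exact min_eq_left hxc'.le
  have hxr_c' : xr S c' = x2' := by
    rw [xr, hset_c', Set.image_pair, hq1.1, hq2.1, csSup_pair]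
    exact max_eq_right hxc'.le
  rcases htb c' with htop' | hbot'
  · exfalso
    have hYc' : Y c' = y2' := by
      rw [htop', hset_c', Set.image_pair, hq1.2, hq2.2, csSup_pair]
      exact max_eq_left hyc'.le
    rcases htb c with htop | hbot
    · -- c top: bus of c' (height y2', span [x1',x2']) meets conn of p1 (x = x1, y1..y2)
      have hYc : Y c = y2 := by
        rw [htop, hset_c, Set.image_pair, hp1.2, hp2.2, csSup_pair]
        exact max_eq_right hyc.le
      have hne : S.f p1 ≠ c' := by rw [hfp1]; exact hcc
      have hm1 : ((x1, y2') : ℝ × ℝ) ∈ busSeg S Y c' :=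
        ⟨hYc'.symm, by rw [hxl_c', hxr_c']; exact ⟨hx1.le, hx2.le⟩⟩
      have hm2 : ((x1, y2') : ℝ × ℝ) ∈ connSeg S Y p1 := by
        refine ⟨hp1.1.symm, ?_⟩
        rw [hp1.2, hfp1, hYc, Set.uIcc_of_le hyc.le]
        exact ⟨hy2.le, hy3.le⟩
      exact Set.disjoint_left.mp (hpl.2.1 c' p1 hne) hm1 hm2
    · -- c bottom: bus of c (height y1, span [x1,x2]) meets conn of q2 (x = x2', y1'..y2')
      have hYc : Y c = y1 := by
        rw [hbot, hset_c, Set.image_pair, hp1.2, hp2.2, csInf_pair]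
        exact min_eq_left hyc.le
      have hne : S.f q2 ≠ c := by rw [hfq2]; exact hcc.symm
      have hm1 : ((x2', y1) : ℝ × ℝ) ∈ busSeg S Y c :=
        ⟨hYc.symm, by rw [hxl_c, hxr_c]; exact ⟨hx2.le, hx3.le⟩⟩
      have hm2 : ((x2', y1) : ℝ × ℝ) ∈ connSeg S Y q2 := by
        refine ⟨hq2.1.symm, ?_⟩
        rw [hq2.2, hfq2, hYc', Set.uIcc_of_le hyc'.le]
        exact ⟨hy1.le, hy2.le⟩
      exact Set.disjoint_left.mp (hpl.2.1 c q2 hne) hm1 hm2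
  · exact hbot'
end

section
/- Let a colored point set contain colors c and c′, each with exactly two points: c has points (x1, y1) and (x2, y2) with x1 < x2 and y1 < y2, and c′ has points (x1′, y1′) and (x2′, y2′) with x1′ < x2′ and y1′ < y2′ (both bottom-left/top-right). Suppose x1 < x1′ < x2′ < x2 and y1 < y1′ < y2 < y2′, i.e., the enclosing rectangle of c′ intersects only the top boundary of the enclosing rectangle of c. Then in every planar (⌐,⌙)-realization, the bus of c is a ⌙-bus. -/
open Set

variable {P C : Type} [Fintype P] [Fintype C]

/-- case (2a): both colors ascending, the rectangle of `c'`
intersects only the top boundary of the rectangle of `c`; then in every planar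
(⌐,⌙)-realization the bus of `c` is a ⌙-bus. -/
theorem stmt12 {P C : Type} [Fintype P] [Fintype C] (S : CPS P C)
    (c c' : C) (hcc : c ≠ c')
    (p1 p2 q1 q2 : P)
    (hfp1 : S.f p1 = c) (hfp2 : S.f p2 = c) (hfq1 : S.f q1 = c') (hfq2 : S.f q2 = c')
    (hc2 : ∀ r : P, S.f r = c → r = p1 ∨ r = p2)
    (hc'2 : ∀ r : P, S.f r = c' → r = q1 ∨ r = q2)
    (x1 x2 y1 y2 x1' x2' y1' y2' : ℝ)
    (hp1 : S.x p1 = x1 ∧ S.y p1 = y1) (hp2 : S.x p2 = x2 ∧ S.y p2 = y2)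
    (hq1 : S.x q1 = x1' ∧ S.y q1 = y1') (hq2 : S.x q2 = x2' ∧ S.y q2 = y2')
    (hxc : x1 < x2) (hyc : y1 < y2) (hxc' : x1' < x2') (hyc' : y1' < y2')
    (hx1 : x1 < x1') (hx2 : x2' < x2)
    (hy1 : y1 < y1') (hy2 : y1' < y2) (hy3 : y2 < y2')
    (Y : C → ℝ) (hY : Function.Injective Y) (hpl : PlanarBus S Y)
    (htb : ∀ c₀ : C, isTopBus S Y c₀ ∨ isBotBus S Y c₀) :
    isBotBus S Y c := by
  obtain ⟨hpx1, hpy1⟩ := hp1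
  obtain ⟨hpx2, hpy2⟩ := hp2
  obtain ⟨hqx1, hqy1⟩ := hq1
  obtain ⟨hqx2, hqy2⟩ := hq2
  have hsetc : {p : P | S.f p = c} = {p1, p2} := by
    ext r
    simp only [Set.mem_setOf_eq, Set.mem_insert_iff, Set.mem_singleton_iff]
    exact ⟨fun h => hc2 r h, fun h => h.elim (fun h => h ▸ hfp1) (fun h => h ▸ hfp2)⟩
  have hsetc' : {p : P | S.f p = c'} = {q1, q2} := by
    ext r
    simp only [Set.mem_setOf_eq, Set.mem_insert_iff, Set.mem_singleton_iff]
    exact ⟨fun h => hc'2 r h, fun h => h.elim (fun h => h ▸ hfq1) (fun h => h ▸ hfq2)⟩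
  have hxlc : xl S c = x1 := by
    rw [xl, hsetc, Set.image_pair, hpx1, hpx2, csInf_pair]
    exact min_eq_left hxc.le
  have hxrc : xr S c = x2 := by
    rw [xr, hsetc, Set.image_pair, hpx1, hpx2, csSup_pair]
    exact max_eq_right hxc.le
  rcases htb c with htc | hbc
  · exfalso
    have hYc : Y c = y2 := by
      rw [isTopBus, hsetc, Set.image_pair, hpy1, hpy2, csSup_pair,
        max_eq_right hyc.le] at htc
      exact htc
    rcases htb c' with htc' | hbc'
    · have hYc' : Y c' = y2' := by
        rw [isTopBus, hsetc', Set.image_pair, hqy1, hqy2, csSup_pair,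
          max_eq_right hyc'.le] at htc'
        exact htc'
      have hdis := hpl.2.1 c q1 (by rw [hfq1]; exact hcc.symm)
      refine Set.disjoint_left.mp hdis (show ((x1', y2) : ℝ × ℝ) ∈ _ from ?_) ?_
      · exact ⟨hYc.symm, by rw [hxlc, hxrc]; exact ⟨hx1.le, (hxc'.trans hx2).le⟩⟩
      · refine ⟨hqx1.symm, ?_⟩
        rw [hqy1, hfq1, hYc', uIcc_of_le (by linarith)]
        exact ⟨hy2.le, hy3.le⟩
    · have hYc' : Y c' = y1' := by
        rw [isBotBus, hsetc', Set.image_pair, hqy1, hqy2, csInf_pair,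
          min_eq_left hyc'.le] at hbc'
        exact hbc'
      have hdis := hpl.2.1 c q2 (by rw [hfq2]; exact hcc.symm)
      refine Set.disjoint_left.mp hdis (show ((x2', y2) : ℝ × ℝ) ∈ _ from ?_) ?_
      · exact ⟨hYc.symm, by rw [hxlc, hxrc]; exact ⟨(hx1.trans hxc').le, hx2.le⟩⟩
      · refine ⟨hqx2.symm, ?_⟩
        rw [hqy2, hfq2, hYc', uIcc_comm, uIcc_of_le hyc'.le]
        exact ⟨hy2.le, hy3.le⟩
  · exact hbc
end

section
/- Let a colored point set contain colors c and c′, each with exactly two points: c has points (x1, y1) and (x2, y2) with x1 < x2 and y1 < y2, and c′ has points (x1′, y1′) and (x2′, y2′) with x1′ < x2′ and y1′ < y2′ (both bottom-left/top-right). Suppose x1 < x1′ < x2 < x2′ and y1 < y1′ < y2 < y2′, i.e., the enclosing rectangle of c′ contains the top-right corner of the enclosing rectangle of c. Then in every planar (⌐,⌙)-realization, exactly one of the buses of c and c′ is a ⌐-bus (and the other is a ⌙-bus). -/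
open Set

variable {P C : Type} [Fintype P] [Fintype C]

/-- case (2e): both colors ascending, the rectangle of `c'`
contains the top-right corner of the rectangle of `c`; then in every planar
(⌐,⌙)-realization exactly one of the two buses is a ⌐-bus and the other is a
⌙-bus. -/
theorem stmt13 {P C : Type} [Fintype P] [Fintype C] (S : CPS P C)
    (c c' : C) (hcc : c ≠ c')
    (p1 p2 q1 q2 : P)
    (hfp1 : S.f p1 = c) (hfp2 : S.f p2 = c) (hfq1 : S.f q1 = c') (hfq2 : S.f q2 = c')
    (hc2 : ∀ r : P, S.f r = c → r = p1 ∨ r = p2)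
    (hc'2 : ∀ r : P, S.f r = c' → r = q1 ∨ r = q2)
    (x1 x2 y1 y2 x1' x2' y1' y2' : ℝ)
    (hp1 : S.x p1 = x1 ∧ S.y p1 = y1) (hp2 : S.x p2 = x2 ∧ S.y p2 = y2)
    (hq1 : S.x q1 = x1' ∧ S.y q1 = y1') (hq2 : S.x q2 = x2' ∧ S.y q2 = y2')
    (hxc : x1 < x2) (hyc : y1 < y2) (hxc' : x1' < x2') (hyc' : y1' < y2')
    (hx1 : x1 < x1') (hx2 : x1' < x2) (hx3 : x2 < x2')
    (hy1 : y1 < y1') (hy2 : y1' < y2) (hy3 : y2 < y2')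
    (Y : C → ℝ) (hY : Function.Injective Y) (hpl : PlanarBus S Y)
    (htb : ∀ c₀ : C, isTopBus S Y c₀ ∨ isBotBus S Y c₀) :
    (isTopBus S Y c ∧ isBotBus S Y c') ∨ (isBotBus S Y c ∧ isTopBus S Y c') := by
  obtain ⟨hx1p, hy1p⟩ := hp1
  obtain ⟨hx2p, hy2p⟩ := hp2
  obtain ⟨hx1q, hy1q⟩ := hq1
  obtain ⟨hx2q, hy2q⟩ := hq2
  have hsetc : {p | S.f p = c} = {p1, p2} := by
    ext r
    constructor
    · exact fun h => hc2 r h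
    · rintro (rfl | rfl) <;> assumption
  have hsetc' : {p | S.f p = c'} = {q1, q2} := by
    ext r
    constructor
    · exact fun h => hc'2 r h
    · rintro (rfl | rfl) <;> assumption
  have hxlc : xl S c = x1 := by
    rw [xl, hsetc, Set.image_pair, hx1p, hx2p, csInf_pair]
    exact inf_eq_left.2 hxc.le
  have hxrc : xr S c = x2 := by
    rw [xr, hsetc, Set.image_pair, hx1p, hx2p, csSup_pair]
    exact sup_eq_right.2 hxc.le
  have hxlc' : xl S c' = x1' := by
    rw [xl, hsetc', Set.image_pair, hx1q, hx2q, csInf_pair]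
    exact inf_eq_left.2 hxc'.le
  have hxrc' : xr S c' = x2' := by
    rw [xr, hsetc', Set.image_pair, hx1q, hx2q, csSup_pair]
    exact sup_eq_right.2 hxc'.le
  have htopc : sSup (S.y '' {p | S.f p = c}) = y2 := by
    rw [hsetc, Set.image_pair, hy1p, hy2p, csSup_pair]
    exact sup_eq_right.2 hyc.le
  have hbotc : sInf (S.y '' {p | S.f p = c}) = y1 := by
    rw [hsetc, Set.image_pair, hy1p, hy2p, csInf_pair]
    exact inf_eq_left.2 hyc.le
  have htopc' : sSup (S.y '' {p | S.f p = c'}) = y2' := by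
    rw [hsetc', Set.image_pair, hy1q, hy2q, csSup_pair]
    exact sup_eq_right.2 hyc'.le
  have hbotc' : sInf (S.y '' {p | S.f p = c'}) = y1' := by
    rw [hsetc', Set.image_pair, hy1q, hy2q, csInf_pair]
    exact inf_eq_left.2 hyc'.le
  have hfq1c : S.f q1 ≠ c := by rw [hfq1]; exact hcc.symm
  have hfp2c' : S.f p2 ≠ c' := by rw [hfp2]; exact hcc
  rcases htb c with hc | hc <;> rcases htb c' with hc' | hc'
  · -- both top: contradiction
    exfalso
    rw [isTopBus, htopc] at hc
    rw [isTopBus, htopc'] at hc'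
    have hdis := hpl.2.1 c q1 hfq1c
    have h1 : ((x1', y2) : ℝ × ℝ) ∈ busSeg S Y c := by
      refine ⟨hc.symm, ?_⟩
      rw [hxlc, hxrc]
      exact ⟨hx1.le, hx2.le⟩
    have h2 : ((x1', y2) : ℝ × ℝ) ∈ connSeg S Y q1 := by
      refine ⟨hx1q.symm, ?_⟩
      rw [hy1q, hfq1, hc', Set.uIcc_of_le hyc'.le]
      exact ⟨hy2.le, hy3.le⟩
    exact Set.disjoint_left.mp hdis h1 h2
  · exact Or.inl ⟨hc, hc'⟩
  · exact Or.inr ⟨hc, hc'⟩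
  · -- both bot: contradiction
    exfalso
    rw [isBotBus, hbotc] at hc
    rw [isBotBus, hbotc'] at hc'
    have hdis := hpl.2.1 c' p2 hfp2c'
    have h1 : ((x2, y1') : ℝ × ℝ) ∈ busSeg S Y c' := by
      refine ⟨hc'.symm, ?_⟩
      rw [hxlc', hxrc']
      exact ⟨hx2.le, hx3.le⟩
    have h2 : ((x2, y1') : ℝ × ℝ) ∈ connSeg S Y p2 := by
      refine ⟨hx2p.symm, ?_⟩
      rw [hy2p, hfp2, hc, Set.uIcc_comm, Set.uIcc_of_le hyc.le]
      exact ⟨hy1.le, hy2.le⟩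
    exact Set.disjoint_left.mp hdis h1 h2
end

section
/- Let a colored point set contain colors c and c′, each with exactly two points: c has points (x1, y1) and (x2, y2) with x1 < x2 and y1 < y2, and c′ has points (x1′, y1′) and (x2′, y2′) with x1′ < x2′ and y1′ < y2′ (both bottom-left/top-right). Suppose x1 < x1′ < x2 < x2′ and y1′ < y1 < y2′ < y2, i.e., the enclosing rectangle of c′ contains the bottom-right corner of the enclosing rectangle of c. Then in every planar (⌐,⌙)-realization, if the bus of c′ is a ⌐-bus then the bus of c is a ⌐-bus. -/
open Set

variable {P C : Type} [Fintype P] [Fintype C]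

/-- case (2f): both colors ascending, the rectangle of `c'`
contains the bottom-right corner of the rectangle of `c`; then in every planar
(⌐,⌙)-realization, if the bus of `c'` is a ⌐-bus then so is the bus of `c`. -/
theorem stmt14 {P C : Type} [Fintype P] [Fintype C] (S : CPS P C)
    (c c' : C) (hcc : c ≠ c')
    (p1 p2 q1 q2 : P)
    (hfp1 : S.f p1 = c) (hfp2 : S.f p2 = c) (hfq1 : S.f q1 = c') (hfq2 : S.f q2 = c')
    (hc2 : ∀ r : P, S.f r = c → r = p1 ∨ r = p2)
    (hc'2 : ∀ r : P, S.f r = c' → r = q1 ∨ r = q2)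
    (x1 x2 y1 y2 x1' x2' y1' y2' : ℝ)
    (hp1 : S.x p1 = x1 ∧ S.y p1 = y1) (hp2 : S.x p2 = x2 ∧ S.y p2 = y2)
    (hq1 : S.x q1 = x1' ∧ S.y q1 = y1') (hq2 : S.x q2 = x2' ∧ S.y q2 = y2')
    (hxc : x1 < x2) (hyc : y1 < y2) (hxc' : x1' < x2') (hyc' : y1' < y2')
    (hx1 : x1 < x1') (hx2 : x1' < x2) (hx3 : x2 < x2')
    (hy1 : y1' < y1) (hy2 : y1 < y2') (hy3 : y2' < y2)
    (Y : C → ℝ) (hY : Function.Injective Y) (hpl : PlanarBus S Y)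
    (htb : ∀ c₀ : C, isTopBus S Y c₀ ∨ isBotBus S Y c₀) :
    isTopBus S Y c' → isTopBus S Y c := by
  intro htc'
  rcases htb c with h | hbot
  · exact h
  -- derive contradiction
  exfalso
  have hsetc : {p | S.f p = c} = {p1, p2} := by
    ext r
    constructor
    · intro hr; exact hc2 r hr
    · rintro (rfl | rfl) <;> simpa [hfp1, hfp2]
  have hsetc' : {p | S.f p = c'} = {q1, q2} := by
    ext r
    constructor
    · intro hr; exact hc'2 r hr
    · rintro (rfl | rfl) <;> simpa [hfq1, hfq2]
  have hYc : Y c = y1 := by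
    rw [isBotBus, hsetc, Set.image_pair, hp1.2, hp2.2, csInf_pair] at hbot
    rw [hbot, min_eq_left hyc.le]
  have hYc' : Y c' = y2' := by
    rw [isTopBus, hsetc', Set.image_pair, hq1.2, hq2.2, csSup_pair] at htc'
    rw [htc', max_eq_right hyc'.le]
  have hxlc : xl S c = x1 := by
    rw [xl, hsetc, Set.image_pair, hp1.1, hp2.1, csInf_pair, min_eq_left hxc.le]
  have hxrc : xr S c = x2 := by
    rw [xr, hsetc, Set.image_pair, hp1.1, hp2.1, csSup_pair, max_eq_right hxc.le]
  have hfq1c : S.f q1 ≠ c := by rw [hfq1]; exact hcc.symm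
  have hdisj := hpl.2.1 c q1 hfq1c
  have hmem1 : ((x1', y1) : ℝ × ℝ) ∈ busSeg S Y c := by
    refine ⟨hYc.symm, ?_⟩
    rw [hxlc, hxrc]
    exact ⟨hx1.le, hx2.le⟩
  have hmem2 : ((x1', y1) : ℝ × ℝ) ∈ connSeg S Y q1 := by
    refine ⟨hq1.1.symm, ?_⟩
    rw [hfq1, hYc', hq1.2, Set.uIcc_of_le hyc'.le]
    exact ⟨hy1.le, hy2.le⟩
  exact hdisj.ne_of_mem hmem1 hmem2 rfl
end

section
/- For a permutation π of {1, …, k}, the diagonal point set P_π admits a planar bus realization if and only if π is 2-stack pushall sortable. -/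
open Set

variable {P C : Type} [Fintype P] [Fintype C]

/-- `π` is 2-stack pushall sortable: there is a word containing, for each
`i`, the letters `α_i, β_i, γ_i` exactly once (encoded by the positions
`a i, b i, c i` of these letters, all distinct), such that the α-letters appear
in the order `α_{π 0}, …, α_{π (k-1)}`, the γ-letters appear in the order
`γ_0, …, γ_{k-1}`, every α-letter precedes every γ-letter, `α_i` precedes `β_i`
precedes `γ_i`, and the two stack (LIFO) conditions (v) and (vi) hold. -/
def TwoStackPushallSortable {k : ℕ} (π : Equiv.Perm (Fin k)) : Prop :=
  ∃ a b c : Fin k → ℕ,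
    Function.Injective a ∧ Function.Injective b ∧ Function.Injective c ∧
    (∀ i j : Fin k, a i ≠ b j) ∧ (∀ i j : Fin k, a i ≠ c j) ∧
    (∀ i j : Fin k, b i ≠ c j) ∧
    StrictMono (fun i : Fin k => a (π i)) ∧
    StrictMono c ∧
    (∀ i j : Fin k, a i < c j) ∧
    (∀ i : Fin k, a i < b i) ∧ (∀ i : Fin k, b i < c i) ∧
    (∀ i j : Fin k, i ≠ j → a i < a j → a j < b i → b j < b i) ∧
    (∀ i j : Fin k, i ≠ j → b i < b j → b j < c i → c j < c i)

section AuxCombinatorics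
def CondA {k : ℕ} (π : Equiv.Perm (Fin k)) (Y : Fin k → ℝ) : Prop :=
  ∀ s t : Fin k, s < t → Y (π s) ∉ Set.uIcc (((t : ℕ) : ℝ) + 1) (Y (π t))

def CondB {k : ℕ} (Y : Fin k → ℝ) : Prop :=
  ∀ j c : Fin k, j < c → Y c ∉ Set.uIcc ((k : ℝ) + (j : ℕ) + 1) (Y j)

lemma notuIcc {a b z : ℝ} (h : z ∉ Set.uIcc a b) :
    (z < a ∧ z < b) ∨ (a < z ∧ b < z) := by
  rw [Set.mem_uIcc] at h
  push_neg at h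
  obtain ⟨h1, h2⟩ := h
  rcases le_or_gt a z with ha | ha
  · exact Or.inr ⟨h2 (h1 ha).le, h1 ha⟩
  · rcases le_or_gt b z with hb | hb
    · exact absurd (h2 hb) (not_lt.2 ha.le)
    · exact Or.inl ⟨ha, hb⟩

noncomputable def gR (x : ℝ) : ℝ := 2 * (⌊x⌋ : ℝ) + x + 1

lemma gR_mono : StrictMono gR := by
  intro x y h
  unfold gR
  have h1 : (⌊x⌋ : ℝ) ≤ (⌊y⌋ : ℝ) := by exact_mod_cast Int.floor_mono h.le
  linarith

def vv {k : ℕ} (π : Equiv.Perm (Fin k)) (i : Fin k) : ℕ := (π.symm i : ℕ) + 1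

def ww {k : ℕ} (i : Fin k) : ℕ := k + (i : ℕ) + 1

noncomputable def ta {k : ℕ} (π : Equiv.Perm (Fin k)) (i : Fin k) : ℝ := 3 * (vv π i : ℝ)

noncomputable def tc {k : ℕ} (i : Fin k) : ℝ := 3 * (ww i : ℝ)

noncomputable def tb {k : ℕ} (π : Equiv.Perm (Fin k)) (Y : Fin k → ℝ) (i : Fin k) : ℝ :=
  if Y i ≤ (vv π i : ℝ) then 3 * (vv π i : ℝ) + 1
  else if (ww i : ℝ) ≤ Y i then 3 * (ww i : ℝ) - 1
  else gR (Y i)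

variable {k : ℕ} (π : Equiv.Perm (Fin k)) (Y : Fin k → ℝ)

lemma vv_le (i : Fin k) : 1 ≤ vv π i ∧ vv π i ≤ k := by
  have := (π.symm i).isLt
  unfold vv
  omega

lemma ww_le (i : Fin k) : k + 1 ≤ ww i ∧ ww i ≤ 2 * k := by
  have := i.isLt
  unfold ww
  omega

lemma vv_inj {i j : Fin k} (h : vv π i = vv π j) : i = j := by
  have : π.symm i = π.symm j := Fin.ext (by unfold vv at h; omega)
  exact π.symm.injective this

lemma ww_inj {i j : Fin k} (h : ww i = ww j) : i = j := Fin.ext (by unfold ww at h; omega)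

lemma vv_lt_iff {i j : Fin k} : vv π i < vv π j ↔ π.symm i < π.symm j := by
  unfold vv
  exact ⟨fun h => by omega, fun h => by have : (π.symm i : ℕ) < π.symm j := h; omega⟩

lemma tb_cases (i : Fin k) :
    (Y i ≤ (vv π i : ℝ) ∧ tb π Y i = 3 * (vv π i : ℝ) + 1) ∨
    ((vv π i : ℝ) < Y i ∧ (ww i : ℝ) ≤ Y i ∧ tb π Y i = 3 * (ww i : ℝ) - 1) ∨
    ((vv π i : ℝ) < Y i ∧ Y i < (ww i : ℝ) ∧ tb π Y i = gR (Y i)) := by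
  unfold tb
  by_cases h1 : Y i ≤ (vv π i : ℝ)
  · exact Or.inl ⟨h1, by rw [if_pos h1]⟩
  · push_neg at h1
    by_cases h2 : (ww i : ℝ) ≤ Y i
    · exact Or.inr (Or.inl ⟨h1, h2, by rw [if_neg (not_le.2 h1), if_pos h2]⟩)
    · push_neg at h2
      exact Or.inr (Or.inr ⟨h1, h2, by rw [if_neg (not_le.2 h1), if_neg (not_le.2 h2)]⟩)

lemma condA' (hA : CondA π Y) {i j : Fin k} (hne : i ≠ j) (hv : vv π i < vv π j) :
    Y i ∉ Set.uIcc ((vv π j : ℕ) : ℝ) (Y j) := by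
  have hst : π.symm i < π.symm j := (vv_lt_iff π).1 hv
  have := hA (π.symm i) (π.symm j) hst
  simp only [Equiv.apply_symm_apply] at this
  have hcast : ((vv π j : ℕ) : ℝ) = ((π.symm j : ℕ) : ℝ) + 1 := by
    unfold vv; push_cast; ring
  rwa [hcast]

lemma condB' (hB : CondB Y) {j i : Fin k} (hji : j < i) :
    Y i ∉ Set.uIcc ((ww j : ℕ) : ℝ) (Y j) := by
  have := hB j i hji
  have hcast : ((ww j : ℕ) : ℝ) = (k : ℝ) + (j : ℕ) + 1 := by
    unfold ww; push_cast; ring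
  rwa [hcast]

lemma Y_not_int (hA : CondA π Y) (hB : CondB Y) (i : Fin k)
    (h1 : (vv π i : ℝ) < Y i) (h2 : Y i < (ww i : ℝ)) (m : ℤ) : (m : ℝ) ≠ Y i := by
  intro heq
  have hm1 : (vv π i : ℤ) < m := by exact_mod_cast heq ▸ h1
  have hm2 : m < (ww i : ℤ) := by exact_mod_cast heq ▸ h2
  have hv := vv_le π i
  have hw := ww_le i
  have hm0 : 0 ≤ m := by omega
  set mn := m.toNat with hmn
  have hmm : (mn : ℤ) = m := Int.toNat_of_nonneg hm0
  have hvmn : vv π i < mn := by omega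
  have hwmn : mn < ww i := by omega
  rcases Nat.lt_or_ge mn (k + 1) with hcase | hcase
  · -- mn ≤ k : use CondA
    have hmn1 : 1 ≤ mn := by have := (vv_le π i).1; omega
    set t : Fin k := ⟨mn - 1, by omega⟩ with ht
    have hst : π.symm i < t := by
      have hpv : (π.symm i : ℕ) + 1 = vv π i := rfl
      have htv : (t : ℕ) = mn - 1 := rfl
      rw [Fin.lt_def, htv]
      omega
    have := hA (π.symm i) t hst
    simp only [Equiv.apply_symm_apply] at this
    have hmr : (mn : ℝ) = (m : ℝ) := by exact_mod_cast hmm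
    have hteq : (((t : ℕ) : ℕ) : ℝ) + 1 = Y i := by
      show ((mn - 1 : ℕ) : ℝ) + 1 = Y i
      rw [Nat.cast_sub hmn1, hmr, ← heq]
      ring
    exact this (hteq ▸ Set.left_mem_uIcc)
  · -- mn ≥ k + 1 : use CondB
    set j0 : Fin k := ⟨mn - k - 1, by omega⟩ with hj0
    have hji : j0 < i := by
      have hjv : (j0 : ℕ) = mn - k - 1 := rfl
      have hwv : ww i = k + (i : ℕ) + 1 := rfl
      rw [Fin.lt_def, hjv]
      omega
    have := condB' Y hB hji
    have hmr : (mn : ℝ) = (m : ℝ) := by exact_mod_cast hmm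
    have hweq : ((ww j0 : ℕ) : ℝ) = Y i := by
      have hjv : (j0 : ℕ) = mn - k - 1 := rfl
      have : ww j0 = mn := by unfold ww; omega
      rw [this, hmr, heq]
    exact this (hweq ▸ Set.left_mem_uIcc)

lemma mid_facts (hA : CondA π Y) (hB : CondB Y) (i : Fin k)
    (h1 : (vv π i : ℝ) < Y i) (h2 : Y i < (ww i : ℝ)) :
    (⌊Y i⌋ : ℝ) < Y i ∧ Y i < (⌊Y i⌋ : ℝ) + 1 ∧
    (vv π i : ℤ) ≤ ⌊Y i⌋ ∧ ⌊Y i⌋ + 1 ≤ (ww i : ℤ) := by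
  have hni := Y_not_int π Y hA hB i h1 h2
  refine ⟨lt_of_le_of_ne (Int.floor_le _) (hni _), Int.lt_floor_add_one _,
    Int.le_floor.2 (by exact_mod_cast h1.le), ?_⟩
  have : ⌊Y i⌋ < (ww i : ℤ) := Int.floor_lt.2 (by exact_mod_cast h2)
  omega

lemma gR_not_int {x : ℝ} (hni : ∀ m : ℤ, (m : ℝ) ≠ x) (m : ℤ) : (m : ℝ) ≠ gR x := by
  intro h
  apply hni (m - 2 * ⌊x⌋ - 1)
  unfold gR at h
  push_cast
  linarith

lemma ta_lt_tb (hA : CondA π Y) (hB : CondB Y) (i : Fin k) : ta π i < tb π Y i := by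
  rcases tb_cases π Y i with ⟨h1, he⟩ | ⟨h1, h2, he⟩ | ⟨h1, h2, he⟩
  · rw [he]; unfold ta; linarith
  · rw [he]; unfold ta
    have hv : (vv π i : ℝ) ≤ (k : ℝ) := by exact_mod_cast (vv_le π i).2
    have hw : (k : ℝ) + 1 ≤ (ww i : ℝ) := by exact_mod_cast (ww_le i).1
    linarith
  · rw [he]; unfold ta gR
    obtain ⟨hf1, hf2, hf3, hf4⟩ := mid_facts π Y hA hB i h1 h2
    have hc : (vv π i : ℝ) ≤ (⌊Y i⌋ : ℝ) := by exact_mod_cast hf3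
    linarith

lemma tb_lt_tc (hA : CondA π Y) (hB : CondB Y) (i : Fin k) : tb π Y i < tc i := by
  rcases tb_cases π Y i with ⟨h1, he⟩ | ⟨h1, h2, he⟩ | ⟨h1, h2, he⟩
  · rw [he]; unfold tc
    have hv : (vv π i : ℝ) ≤ (k : ℝ) := by exact_mod_cast (vv_le π i).2
    have hw : (k : ℝ) + 1 ≤ (ww i : ℝ) := by exact_mod_cast (ww_le i).1
    linarith
  · rw [he]; unfold tc; linarith
  · rw [he]; unfold tc gR
    obtain ⟨hf1, hf2, hf3, hf4⟩ := mid_facts π Y hA hB i h1 h2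
    have hc : (⌊Y i⌋ : ℝ) + 1 ≤ (ww i : ℝ) := by exact_mod_cast hf4
    linarith

lemma ta_lt_tc (i j : Fin k) : ta π i < tc j := by
  unfold ta tc
  have hv : (vv π i : ℝ) ≤ (k : ℝ) := by exact_mod_cast (vv_le π i).2
  have hw : (k : ℝ) + 1 ≤ (ww j : ℝ) := by exact_mod_cast (ww_le j).1
  linarith

lemma ta_mono : StrictMono (fun s : Fin k => ta π (π s)) := by
  intro s t hst
  unfold ta vv
  simp only [Equiv.symm_apply_apply]
  have : ((s : ℕ) : ℝ) < ((t : ℕ) : ℝ) := by exact_mod_cast hst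
  push_cast
  linarith

lemma tc_mono : StrictMono (tc (k := k)) := by
  intro i j hij
  unfold tc ww
  have : ((i : ℕ) : ℝ) < ((j : ℕ) : ℝ) := by exact_mod_cast hij
  push_cast
  linarith

lemma lifo1 (hA : CondA π Y) (hB : CondB Y) {i j : Fin k} (hij : i ≠ j)
    (h1 : ta π i < ta π j) (h2 : ta π j < tb π Y i) : tb π Y j < tb π Y i := by
  have hvij : vv π i < vv π j := by
    unfold ta at h1
    have : (vv π i : ℝ) < (vv π j : ℝ) := by linarith
    exact_mod_cast this
  have hvjk : (vv π j : ℝ) ≤ (k : ℝ) := by exact_mod_cast (vv_le π j).2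
  unfold ta at h2
  rcases tb_cases π Y i with ⟨hi1, hei⟩ | ⟨hi1, hi2, hei⟩ | ⟨hi1, hi2, hei⟩
  · -- impossible: β_i immediately after α_i, but α_j in between
    exfalso
    rw [hei] at h2
    have : 3 * (vv π j) < 3 * (vv π i) + 1 := by exact_mod_cast h2
    omega
  · -- i still above at departure
    have hwik : (k : ℝ) + 1 ≤ (ww i : ℝ) := by exact_mod_cast (ww_le i).1
    have hYji : Y j < Y i := by
      rcases notuIcc (condA' π Y hA hij hvij) with ⟨ha, _⟩ | ⟨_, hb⟩
      · exfalso; linarith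
      · exact hb
    rcases tb_cases π Y j with ⟨hj1, hej⟩ | ⟨hj1, hj2, hej⟩ | ⟨hj1, hj2, hej⟩
    · rw [hei, hej]
      linarith
    · -- both above at their departures: j must depart first
      have hji : j < i := by
        rcases lt_trichotomy i j with hlt | heq | hlt
        · exfalso
          rcases notuIcc (condB' Y hB hlt) with ⟨ha, _⟩ | ⟨_, hb⟩
          · -- Y j < ww i, but ww i < ww j ≤ Y j
            have hwwij : (ww i : ℝ) < (ww j : ℝ) := by
              have : ww i < ww j := by
                unfold ww; have : (i : ℕ) < (j : ℕ) := hlt; omega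
              exact_mod_cast this
            linarith
          · linarith
        · exact absurd heq hij
        · exact hlt
      have hwwji : (ww j : ℝ) < (ww i : ℝ) := by
        have : ww j < ww i := by
          unfold ww; have : (j : ℕ) < (i : ℕ) := hji; omega
        exact_mod_cast this
      rw [hei, hej]
      linarith
    · -- j in mid position
      obtain ⟨hfj1, hfj2, hfj3, hfj4⟩ := mid_facts π Y hA hB j hj1 hj2
      have hYjwi : Y j < (ww i : ℝ) := by
        rcases lt_trichotomy i j with hlt | heq | hlt
        · rcases notuIcc (condB' Y hB hlt) with ⟨ha, _⟩ | ⟨_, hb⟩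
          · exact ha
          · exact absurd hb (not_lt.2 hYji.le)
        · exact absurd heq hij
        · have : ww j ≤ ww i := by
            unfold ww; have : (j : ℕ) < (i : ℕ) := hlt; omega
          have : (ww j : ℝ) ≤ (ww i : ℝ) := by exact_mod_cast this
          linarith
      have hfloor : ⌊Y j⌋ + 1 ≤ (ww i : ℤ) := by
        have : ⌊Y j⌋ < (ww i : ℤ) := Int.floor_lt.2 (by exact_mod_cast hYjwi)
        omega
      have hfr : (⌊Y j⌋ : ℝ) + 1 ≤ (ww i : ℝ) := by exact_mod_cast hfloor
      rw [hei, hej]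
      unfold gR
      linarith
  · -- i in mid position
    obtain ⟨hfi1, hfi2, hfi3, hfi4⟩ := mid_facts π Y hA hB i hi1 hi2
    rw [hei] at h2
    unfold gR at h2
    have hvjf : (vv π j : ℤ) ≤ ⌊Y i⌋ := by
      have : 3 * (vv π j : ℝ) < 3 * (⌊Y i⌋ : ℝ) + 2 := by linarith
      have : 3 * (vv π j : ℤ) < 3 * ⌊Y i⌋ + 2 := by exact_mod_cast this
      omega
    have hvjfr : (vv π j : ℝ) ≤ (⌊Y i⌋ : ℝ) := by exact_mod_cast hvjf
    have hvjYi : (vv π j : ℝ) < Y i := by linarith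
    have hYji : Y j < Y i := by
      rcases notuIcc (condA' π Y hA hij hvij) with ⟨ha, _⟩ | ⟨_, hb⟩
      · exfalso; linarith
      · exact hb
    rcases tb_cases π Y j with ⟨hj1, hej⟩ | ⟨hj1, hj2, hej⟩ | ⟨hj1, hj2, hej⟩
    · rw [hei, hej]
      unfold gR
      linarith
    · have hwjf : (ww j : ℤ) ≤ ⌊Y i⌋ := Int.le_floor.2 (by
        have : (ww j : ℝ) ≤ Y i := by linarith
        exact_mod_cast this)
      have hwjfr : (ww j : ℝ) ≤ (⌊Y i⌋ : ℝ) := by exact_mod_cast hwjf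
      rw [hei, hej]
      unfold gR
      linarith
    · rw [hei, hej]
      exact gR_mono hYji

lemma lifo2 (hA : CondA π Y) (hB : CondB Y) {i j : Fin k} (hij : i ≠ j)
    (h1 : tb π Y i < tb π Y j) (h2 : tb π Y j < tc i) : tc j < tc i := by
  rcases lt_trichotomy j i with hji | heq | hji
  · unfold tc
    have : ww j < ww i := by
      unfold ww; have : (j : ℕ) < (i : ℕ) := hji; omega
    have : (ww j : ℝ) < (ww i : ℝ) := by exact_mod_cast this
    linarith
  · exact absurd heq.symm hij
  · -- i < j leads to a contradiction
    exfalso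
    have hwwij : (ww i : ℝ) < (ww j : ℝ) := by
      have : ww i < ww j := by
        unfold ww; have : (i : ℕ) < (j : ℕ) := hji; omega
      exact_mod_cast this
    have hBd := notuIcc (condB' Y hB hji)
    unfold tc at h2
    have hvik : (vv π i : ℝ) ≤ (k : ℝ) := by exact_mod_cast (vv_le π i).2
    have hvjk : (vv π j : ℝ) ≤ (k : ℝ) := by exact_mod_cast (vv_le π j).2
    have hwik : (k : ℝ) + 1 ≤ (ww i : ℝ) := by exact_mod_cast (ww_le i).1
    rcases tb_cases π Y j with ⟨hj1, hej⟩ | ⟨hj1, hj2, hej⟩ | ⟨hj1, hj2, hej⟩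
    · -- j below from the start
      rw [hej] at h1 h2
      have hYjwi : Y j < (ww i : ℝ) := by linarith
      have hYji : Y j < Y i := by
        rcases hBd with ⟨_, hb⟩ | ⟨ha, _⟩
        · exact hb
        · exfalso; linarith
      rcases tb_cases π Y i with ⟨hi1, hei⟩ | ⟨hi1, hi2, hei⟩ | ⟨hi1, hi2, hei⟩
      · rw [hei] at h1
        have hvij : vv π i < vv π j := by
          have : 3 * (vv π i) + 1 < 3 * (vv π j) + 1 := by exact_mod_cast h1
          omega
        have hvijr : (vv π i : ℝ) < (vv π j : ℝ) := by exact_mod_cast hvij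
        rcases notuIcc (condA' π Y hA hij hvij) with ⟨_, hb⟩ | ⟨ha, _⟩
        · linarith
        · linarith
      · rw [hei] at h1
        have : 3 * (ww i : ℤ) < 3 * (vv π j : ℤ) + 2 := by
          have : 3 * (ww i : ℝ) < 3 * (vv π j : ℝ) + 2 := by linarith
          exact_mod_cast this
        have hwvz : (ww i : ℤ) ≤ (vv π j : ℤ) := by omega
        have : (ww i : ℝ) ≤ (vv π j : ℝ) := by exact_mod_cast hwvz
        linarith
      · obtain ⟨hfi1, hfi2, hfi3, hfi4⟩ := mid_facts π Y hA hB i hi1 hi2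
        rw [hei] at h1
        unfold gR at h1
        have hflt : ⌊Y i⌋ < (vv π j : ℤ) := by
          have : 3 * (⌊Y i⌋ : ℝ) + 1 < 3 * (vv π j : ℝ) + 1 := by linarith
          have : 3 * ⌊Y i⌋ + 1 < 3 * (vv π j : ℤ) + 1 := by exact_mod_cast this
          omega
        have hfltr : (⌊Y i⌋ : ℝ) + 1 ≤ (vv π j : ℝ) := by exact_mod_cast hflt
        have hYivj : Y i < (vv π j : ℝ) := by linarith
        have hvij : vv π i < vv π j := by
          have : (vv π i : ℝ) < (vv π j : ℝ) := by linarith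
          exact_mod_cast this
        rcases notuIcc (condA' π Y hA hij hvij) with ⟨_, hb⟩ | ⟨ha, _⟩
        · linarith
        · linarith
    · -- j above at its departure
      rw [hej] at h2
      have : 3 * (ww j : ℤ) < 3 * (ww i : ℤ) + 1 := by
        have : 3 * (ww j : ℝ) < 3 * (ww i : ℝ) + 1 := by linarith
        exact_mod_cast this
      have : (ww j : ℤ) ≤ (ww i : ℤ) := by omega
      have : (ww j : ℝ) ≤ (ww i : ℝ) := by exact_mod_cast this
      linarith
    · -- j in mid position
      obtain ⟨hfj1, hfj2, hfj3, hfj4⟩ := mid_facts π Y hA hB j hj1 hj2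
      rw [hej] at h1 h2
      unfold gR at h1 h2
      have hfwi : ⌊Y j⌋ + 1 ≤ (ww i : ℤ) := by
        have : 3 * (⌊Y j⌋ : ℝ) + 1 < 3 * (ww i : ℝ) := by linarith
        have : 3 * ⌊Y j⌋ + 1 < 3 * (ww i : ℤ) := by exact_mod_cast this
        omega
      have hfwir : (⌊Y j⌋ : ℝ) + 1 ≤ (ww i : ℝ) := by exact_mod_cast hfwi
      have hYjwi : Y j < (ww i : ℝ) := by linarith
      have hYji : Y j < Y i := by
        rcases hBd with ⟨_, hb⟩ | ⟨ha, _⟩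
        · exact hb
        · exfalso; linarith
      rcases tb_cases π Y i with ⟨hi1, hei⟩ | ⟨hi1, hi2, hei⟩ | ⟨hi1, hi2, hei⟩
      · rw [hei] at h1
        have hvif : (vv π i : ℤ) ≤ ⌊Y j⌋ := by
          have : 3 * (vv π i : ℝ) + 1 < 3 * (⌊Y j⌋ : ℝ) + 2 := by linarith
          have : 3 * (vv π i : ℤ) + 1 < 3 * ⌊Y j⌋ + 2 := by exact_mod_cast this
          omega
        have : (vv π i : ℝ) ≤ (⌊Y j⌋ : ℝ) := by exact_mod_cast hvif
        linarith
      · rw [hei] at h1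
        have hwif : (ww i : ℤ) ≤ ⌊Y j⌋ := by
          have : 3 * (ww i : ℝ) - 1 < 3 * (⌊Y j⌋ : ℝ) + 2 := by linarith
          have : 3 * (ww i : ℤ) < 3 * ⌊Y j⌋ + 3 := by
            have h3 : 3 * (ww i : ℝ) < 3 * (⌊Y j⌋ : ℝ) + 3 := by linarith
            exact_mod_cast h3
          omega
        have : (ww i : ℝ) ≤ (⌊Y j⌋ : ℝ) := by exact_mod_cast hwif
        linarith
      · rw [hei] at h1
        have := gR_mono.lt_iff_lt.1 h1
        linarith

lemma tb_not_int (hA : CondA π Y) (hB : CondB Y) (i : Fin k)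
    (h1 : (vv π i : ℝ) < Y i) (h2 : Y i < (ww i : ℝ)) (m : ℤ) : (m : ℝ) ≠ gR (Y i) :=
  gR_not_int (Y_not_int π Y hA hB i h1 h2) m

lemma ta_ne_tb (hA : CondA π Y) (hB : CondB Y) (i j : Fin k) : ta π i ≠ tb π Y j := by
  unfold ta
  rcases tb_cases π Y j with ⟨h1, he⟩ | ⟨h1, h2, he⟩ | ⟨h1, h2, he⟩ <;> rw [he]
  · intro h
    have : 3 * (vv π i) = 3 * (vv π j) + 1 := by exact_mod_cast h
    omega
  · intro h
    have : 3 * (vv π i : ℝ) + 1 = 3 * (ww j : ℝ) := by linarith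
    have : 3 * (vv π i) + 1 = 3 * (ww j) := by exact_mod_cast this
    omega
  · have := tb_not_int π Y hA hB j h1 h2 (3 * (vv π i : ℕ) : ℤ)
    intro h
    apply this
    push_cast
    linarith

lemma tc_ne_tb (hA : CondA π Y) (hB : CondB Y) (i j : Fin k) : tc i ≠ tb π Y j := by
  unfold tc
  rcases tb_cases π Y j with ⟨h1, he⟩ | ⟨h1, h2, he⟩ | ⟨h1, h2, he⟩ <;> rw [he]
  · intro h
    have : 3 * (ww i) = 3 * (vv π j) + 1 := by exact_mod_cast h
    omega
  · intro h
    have : 3 * (ww i : ℝ) + 1 = 3 * (ww j : ℝ) := by linarith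
    have : 3 * (ww i) + 1 = 3 * (ww j) := by exact_mod_cast this
    omega
  · have := tb_not_int π Y hA hB j h1 h2 (3 * (ww i : ℕ) : ℤ)
    intro h
    apply this
    push_cast
    linarith

lemma ta_ne_tc (i j : Fin k) : ta π i ≠ tc j := ne_of_lt (ta_lt_tc π i j)

lemma ta_inj {i j : Fin k} (h : ta π i = ta π j) : i = j := by
  unfold ta at h
  apply vv_inj π
  have : (vv π i : ℝ) = (vv π j : ℝ) := by linarith
  exact_mod_cast this

lemma tc_inj {i j : Fin k} (h : tc i = tc j) : i = j := by
  unfold tc at h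
  apply ww_inj
  have : (ww i : ℝ) = (ww j : ℝ) := by linarith
  exact_mod_cast this

lemma tb_inj (hYinj : Function.Injective Y) (hA : CondA π Y) (hB : CondB Y)
    {i j : Fin k} (h : tb π Y i = tb π Y j) : i = j := by
  by_contra hne
  rcases tb_cases π Y i with ⟨hi1, hei⟩ | ⟨hi1, hi2, hei⟩ | ⟨hi1, hi2, hei⟩ <;>
    rcases tb_cases π Y j with ⟨hj1, hej⟩ | ⟨hj1, hj2, hej⟩ | ⟨hj1, hj2, hej⟩ <;>
    rw [hei, hej] at h
  · apply hne
    apply vv_inj π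
    have : 3 * (vv π i) + 1 = 3 * (vv π j) + 1 := by exact_mod_cast h
    omega
  · have : 3 * (vv π i : ℝ) + 2 = 3 * (ww j : ℝ) := by linarith
    have : 3 * (vv π i) + 2 = 3 * (ww j) := by exact_mod_cast this
    omega
  · exact tb_not_int π Y hA hB j hj1 hj2 (3 * (vv π i : ℕ) + 1 : ℤ) (by push_cast; linarith)
  · have : 3 * (vv π j : ℝ) + 2 = 3 * (ww i : ℝ) := by linarith
    have : 3 * (vv π j) + 2 = 3 * (ww i) := by exact_mod_cast this
    omega
  · apply hne
    apply ww_inj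
    have : 3 * (ww i : ℝ) = 3 * (ww j : ℝ) := by linarith
    have : 3 * (ww i) = 3 * (ww j) := by exact_mod_cast this
    omega
  · exact tb_not_int π Y hA hB j hj1 hj2 (3 * (ww i : ℕ) - 1 : ℤ) (by
      push_cast
      have : (1 : ℝ) ≤ (ww i : ℝ) := by
        have := (ww_le i).1; exact_mod_cast Nat.one_le_iff_ne_zero.2 (by omega)
      linarith)
  · exact tb_not_int π Y hA hB i hi1 hi2 (3 * (vv π j : ℕ) + 1 : ℤ) (by push_cast; linarith)
  · exact tb_not_int π Y hA hB i hi1 hi2 (3 * (ww j : ℕ) - 1 : ℤ) (by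
      push_cast
      have : (1 : ℝ) ≤ (ww j : ℝ) := by
        have := (ww_le j).1; exact_mod_cast Nat.one_le_iff_ne_zero.2 (by omega)
      linarith)
  · exact hne (hYinj (gR_mono.injective h))

noncomputable def rk {σ : Type} [Fintype σ] (E : σ → ℝ) (x : σ) : ℕ :=
  (Finset.univ.filter fun e => E e < E x).card

lemma rk_lt_rk {σ : Type} [Fintype σ] {E : σ → ℝ} (hE : Function.Injective E) {x y : σ} :
    rk E x < rk E y ↔ E x < E y := by
  constructor
  · intro h
    unfold rk at h
    by_contra hle
    push_neg at hle
    rcases eq_or_lt_of_le hle with heq | hlt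
    · rw [hE heq] at h; exact lt_irrefl _ h
    · have : (Finset.univ.filter fun e => E e < E y) ⊆
        (Finset.univ.filter fun e => E e < E x) := by
        intro e he
        simp only [Finset.mem_filter, Finset.mem_univ, true_and] at *
        exact he.trans hlt
      exact absurd (Finset.card_le_card this) (by omega)
  · intro h
    unfold rk
    apply Finset.card_lt_card
    constructor
    · intro e he
      simp only [Finset.mem_filter, Finset.mem_univ, true_and] at *
      exact he.trans h
    · intro hsub
      have hx : x ∈ Finset.univ.filter fun e => E e < E y := by simp [h]
      have := hsub hx
      simp at this

lemma rk_inj {σ : Type} [Fintype σ] {E : σ → ℝ} (hE : Function.Injective E) :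
    Function.Injective (rk E) := by
  intro x y h
  by_contra hne
  rcases lt_or_gt_of_ne (fun he => hne (hE he) : E x ≠ E y) with hl | hl
  · have := (rk_lt_rk hE).2 hl; omega
  · have := (rk_lt_rk hE).2 hl; omega

lemma sortable_of_Y (hYinj : Function.Injective Y) (hA : CondA π Y) (hB : CondB Y) :
    TwoStackPushallSortable π := by
  classical
  set E : Fin k ⊕ (Fin k ⊕ Fin k) → ℝ :=
    Sum.elim (ta π) (Sum.elim (tb π Y) (tc (k := k))) with hE
  have hEinj : Function.Injective E := by
    intro x y h
    rcases x with i | i | i <;> rcases y with j | j | j <;>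
      simp only [hE, Sum.elim_inl, Sum.elim_inr] at h
    · rw [ta_inj π h]
    · exact absurd h (ta_ne_tb π Y hA hB i j)
    · exact absurd h (ta_ne_tc π i j)
    · exact absurd h.symm (ta_ne_tb π Y hA hB j i)
    · rw [tb_inj π Y hYinj hA hB h]
    · exact absurd h.symm (tc_ne_tb π Y hA hB j i)
    · exact absurd h.symm (ta_ne_tc π j i)
    · exact absurd h (tc_ne_tb π Y hA hB i j)
    · rw [tc_inj h]
  have hlt : ∀ x y, rk E x < rk E y ↔ E x < E y := fun x y => rk_lt_rk hEinj
  refine ⟨fun i => rk E (.inl i), fun i => rk E (.inr (.inl i)), fun i => rk E (.inr (.inr i)),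
    ?_, ?_, ?_, ?_, ?_, ?_, ?_, ?_, ?_, ?_, ?_, ?_, ?_⟩
  · intro i j h
    have := rk_inj hEinj h
    simpa using this
  · intro i j h
    have := rk_inj hEinj h
    simpa using this
  · intro i j h
    have := rk_inj hEinj h
    simpa using this
  · intro i j h
    have := rk_inj hEinj h
    simp at this
  · intro i j h
    have := rk_inj hEinj h
    simp at this
  · intro i j h
    have := rk_inj hEinj h
    simp at this
  · intro s t hst
    exact (hlt _ _).2 (by simpa [hE] using ta_mono π hst)
  · intro s t hst
    exact (hlt _ _).2 (by simpa [hE] using tc_mono hst)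
  · intro i j
    exact (hlt _ _).2 (by simpa [hE] using ta_lt_tc π i j)
  · intro i
    exact (hlt _ _).2 (by simpa [hE] using ta_lt_tb π Y hA hB i)
  · intro i
    exact (hlt _ _).2 (by simpa [hE] using tb_lt_tc π Y hA hB i)
  · intro i j hij h1 h2
    refine (hlt _ _).2 ?_
    simp only [hE, Sum.elim_inl, Sum.elim_inr]
    exact lifo1 π Y hA hB hij (by simpa [hE] using (hlt _ _).1 h1)
      (by simpa [hE] using (hlt _ _).1 h2)
  · intro i j hij h1 h2
    refine (hlt _ _).2 ?_
    simp only [hE, Sum.elim_inl, Sum.elim_inr]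
    exact lifo2 π Y hA hB hij (by simpa [hE] using (hlt _ _).1 h1)
      (by simpa [hE] using (hlt _ _).1 h2)

lemma Y_of_sortable {k : ℕ} (π : Equiv.Perm (Fin k))
    (h : TwoStackPushallSortable π) :
    ∃ Y : Fin k → ℝ, Function.Injective Y ∧ CondA π Y ∧ CondB Y := by
  obtain ⟨a, b, c, ha, hb, hc, hab, hac, hbc, hamono, hcmono, haltc, haltb, hbltc, hv, hvi⟩ := h
  -- the "height" of the sweep at word position τ
  set h : ℕ → ℕ := fun τ =>
    (Finset.univ.filter fun i : Fin k => a i < τ).card +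
    (Finset.univ.filter fun j : Fin k => c j < τ).card with hh
  set r : Fin k → ℕ := fun i => (Finset.univ.filter fun j : Fin k => b j < b i).card with hr
  set Y : Fin k → ℝ := fun i => (h (b i) : ℝ) + ((r i : ℝ) + 1) / ((k : ℝ) + 1) with hY
  have hkpos : (0:ℝ) < (k:ℝ) + 1 := by positivity
  have hfrac0 : ∀ i : Fin k, (0:ℝ) < ((r i : ℝ) + 1) / ((k : ℝ) + 1) := by
    intro i; positivity
  have hfrac1 : ∀ i : Fin k, ((r i : ℝ) + 1) / ((k : ℝ) + 1) < 1 := by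
    intro i
    rw [div_lt_one hkpos]
    have : r i < k := by
      have : (Finset.univ.filter fun j : Fin k => b j < b i) ⊆ Finset.univ.erase i := by
        intro j hj
        simp only [Finset.mem_filter, Finset.mem_univ, true_and] at hj
        apply Finset.mem_erase.2
        exact ⟨fun he => by subst he; exact lt_irrefl _ hj, Finset.mem_univ _⟩
      calc r i ≤ (Finset.univ.erase i).card := Finset.card_le_card this
        _ < Finset.univ.card := Finset.card_erase_lt_of_mem (Finset.mem_univ i)
        _ = k := Finset.card_univ.trans (Fintype.card_fin k)
    have : (r i : ℝ) < (k : ℝ) := by exact_mod_cast this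
    linarith
  have hYlb : ∀ i, (h (b i) : ℝ) < Y i := fun i => by
    simpa [hY] using hfrac0 i
  have hYub : ∀ i, Y i < (h (b i) : ℝ) + 1 := fun i => by
    have := hfrac1 i
    simp only [hY]
    linarith
  -- monotonicity: b i < b j → Y i < Y j
  have hmono : ∀ i j : Fin k, b i < b j → Y i < Y j := by
    intro i j hbij
    have hhm : h (b i) ≤ h (b j) := by
      apply Nat.add_le_add <;>
      · apply Finset.card_le_card
        intro e he
        simp only [Finset.mem_filter, Finset.mem_univ, true_and] at *
        omega
    have hrm : r i < r j := by
      apply Finset.card_lt_card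
      constructor
      · intro e he
        simp only [Finset.mem_filter, Finset.mem_univ, true_and] at *
        omega
      · intro hsub
        have : i ∈ Finset.univ.filter fun j' : Fin k => b j' < b j := by simp [hbij]
        have := hsub this
        simp at this
    rcases Nat.lt_or_ge (h (b i)) (h (b j)) with hlt | hge
    · have h1 := hYub i
      have h2 := hYlb j
      have : (h (b i) : ℝ) + 1 ≤ (h (b j) : ℝ) := by exact_mod_cast Nat.succ_le_of_lt hlt
      linarith
    · have heq : h (b i) = h (b j) := le_antisymm hhm hge
      simp only [hY, heq]
      have hrr : (r i : ℝ) < (r j : ℝ) := by exact_mod_cast hrm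
      have : ((r i : ℝ) + 1) / ((k : ℝ) + 1) < ((r j : ℝ) + 1) / ((k : ℝ) + 1) := by
        apply div_lt_div_of_pos_right (by linarith) hkpos
      linarith
  have hYlt : ∀ i j : Fin k, b i < b j → Y i < Y j := hmono
  have hYinj : Function.Injective Y := by
    intro i j hij
    by_contra hne
    rcases (hb.ne hne).lt_or_gt with h1 | h1
    · exact absurd hij (ne_of_lt (hYlt _ _ h1))
    · exact absurd hij.symm (ne_of_lt (hYlt _ _ h1))
  refine ⟨Y, hYinj, ?_, ?_⟩
  · -- CondA
    intro s t hst
    have hane : a (π t) ≠ b (π s) := hab _ _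
    have haa : a (π s) < a (π t) := hamono hst
    rcases hane.lt_or_gt with hcase | hcase
    · -- arrival of π t before β of π s : π s still in first stack
      have hbb : b (π t) < b (π s) := hv (π s) (π t)
        (fun he => absurd (π.injective he) (ne_of_lt hst)) haa hcase
      have hYji : Y (π t) < Y (π s) := hYlt _ _ hbb
      have hcount : (t:ℕ) + 1 ≤ h (b (π s)) := by
        have hsub : Finset.image π (Finset.univ.filter fun s' : Fin k => s' ≤ t) ⊆
            Finset.univ.filter fun i' : Fin k => a i' < b (π s) := by
          intro e he
          simp only [Finset.mem_image, Finset.mem_filter, Finset.mem_univ, true_and] at *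
          obtain ⟨s', hs', rfl⟩ := he
          calc a (π s') ≤ a (π t) := by
                rcases eq_or_lt_of_le hs' with rfl | h'
                · exact le_refl _
                · exact le_of_lt (hamono h')
            _ < b (π s) := hcase
        have hcard : (Finset.image π (Finset.univ.filter fun s' : Fin k => s' ≤ t)).card
            = t + 1 := by
          rw [Finset.card_image_of_injective _ π.injective]
          have : (Finset.univ.filter fun s' : Fin k => s' ≤ t) = Finset.Iic t := by
            ext e; simp
          rw [this, Fin.card_Iic]
        have := Finset.card_le_card hsub
        rw [hcard] at this
        calc (t:ℕ) + 1 ≤ _ := this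
          _ ≤ h (b (π s)) := Nat.le_add_right _ _
      have : ((t : ℕ) : ℝ) + 1 < Y (π s) := by
        have h1 := hYlb (π s)
        have h2 : ((t : ℕ) : ℝ) + 1 ≤ (h (b (π s)) : ℝ) := by exact_mod_cast hcount
        linarith
      exact Set.notMem_uIcc_of_gt this hYji
    · -- β of π s before arrival of π t : π s already in second stack
      have hYij : Y (π s) < Y (π t) := hYlt _ _ (lt_trans hcase (haltb _))
      have hcount : h (b (π s)) ≤ (t:ℕ) := by
        have h1 : (Finset.univ.filter fun i' : Fin k => a i' < b (π s)).card ≤ t := by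
          have hsub : (Finset.univ.filter fun i' : Fin k => a i' < b (π s)) ⊆
              Finset.image π (Finset.univ.filter fun s' : Fin k => s' < t) := by
            intro e he
            simp only [Finset.mem_image, Finset.mem_filter, Finset.mem_univ, true_and] at *
            refine ⟨π.symm e, ?_, by simp⟩
            have : a (π (π.symm e)) < a (π t) := by
              simpa using lt_trans he hcase
            exact hamono.lt_iff_lt.mp this
          have hcard : (Finset.image π (Finset.univ.filter fun s' : Fin k => s' < t)).card
              = t := by
            rw [Finset.card_image_of_injective _ π.injective]
            have : (Finset.univ.filter fun s' : Fin k => s' < t) = Finset.Iio t := by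
              ext e; simp
            rw [this, Fin.card_Iio]
          calc _ ≤ _ := Finset.card_le_card hsub
            _ = t := hcard
        have h2 : (Finset.univ.filter fun j' : Fin k => c j' < b (π s)).card = 0 := by
          rw [Finset.card_eq_zero]
          apply Finset.filter_eq_empty_iff.mpr
          intro e _
          have h3 := haltc (π t) e
          omega
        simp only [hh]
        omega
      have : Y (π s) < ((t : ℕ) : ℝ) + 1 := by
        have h1 := hYub (π s)
        have h2 : (h (b (π s)) : ℝ) ≤ ((t : ℕ) : ℝ) := by exact_mod_cast hcount
        linarith
      exact Set.notMem_uIcc_of_lt this hYij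
  · -- CondB
    intro j0 i hji
    have hne : c j0 ≠ b i := (hbc i j0).symm
    rcases hne.lt_or_gt with hcase | hcase
    · -- i departs after j0  and β of i after departure of j0 : i above
      have hYji : Y j0 < Y i := hYlt _ _ (lt_trans (hbltc j0) hcase)
      have hcount : k + (j0 : ℕ) + 1 ≤ h (b i) := by
        have h1 : (Finset.univ.filter fun i' : Fin k => a i' < b i).card = k := by
          have : (Finset.univ.filter fun i' : Fin k => a i' < b i) = Finset.univ := by
            apply Finset.filter_true_of_mem
            intro e _
            exact lt_trans (haltc e j0) hcase
          rw [this, Finset.card_univ, Fintype.card_fin]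
        have h2 : (j0 : ℕ) + 1 ≤ (Finset.univ.filter fun j' : Fin k => c j' < b i).card := by
          have hsub : Finset.Iic j0 ⊆ Finset.univ.filter fun j' : Fin k => c j' < b i := by
            intro e he
            simp only [Finset.mem_Iic] at he
            simp only [Finset.mem_filter, Finset.mem_univ, true_and]
            calc c e ≤ c j0 := by
                  rcases eq_or_lt_of_le he with rfl | h'
                  · exact le_refl _
                  · exact le_of_lt (hcmono h')
              _ < b i := hcase
          have := Finset.card_le_card hsub
          rwa [Fin.card_Iic] at this
        simp only [hh]
        omega
      have : (k : ℝ) + (j0 : ℕ) + 1 < Y i := by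
        have h1 := hYlb i
        have h2 : (k : ℝ) + (j0 : ℕ) + 1 ≤ (h (b i) : ℝ) := by exact_mod_cast hcount
        linarith
      exact Set.notMem_uIcc_of_gt this hYji
    · -- β of i before departure of j0 : i must already be below j0 in second stack
      have hbb : b i < b j0 := by
        by_contra hge
        push_neg at hge
        have hne2 : b j0 ≠ b i := fun he => absurd (hb he) (ne_of_lt hji)
        have h3 : b j0 < b i := lt_of_le_of_ne hge hne2
        have := hvi j0 i (fun he => absurd he (ne_of_lt hji)) h3 hcase
        exact absurd (hcmono.lt_iff_lt.mp this) (not_lt_of_gt hji)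
      have hYij : Y i < Y j0 := hYlt _ _ hbb
      have hcount : h (b i) ≤ k + (j0 : ℕ) := by
        have h1 : (Finset.univ.filter fun i' : Fin k => a i' < b i).card ≤ k := by
          calc _ ≤ Finset.univ.card := Finset.card_le_card (Finset.filter_subset _ _)
            _ = k := by rw [Finset.card_univ, Fintype.card_fin]
        have h2 : (Finset.univ.filter fun j' : Fin k => c j' < b i).card ≤ (j0 : ℕ) := by
          have hsub : (Finset.univ.filter fun j' : Fin k => c j' < b i) ⊆ Finset.Iio j0 := by
            intro e he
            simp only [Finset.mem_filter, Finset.mem_univ, true_and] at he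
            simp only [Finset.mem_Iio]
            exact hcmono.lt_iff_lt.mp (lt_trans he hcase)
          have := Finset.card_le_card hsub
          rwa [Fin.card_Iio] at this
        simp only [hh]
        omega
      have : Y i < (k : ℝ) + (j0 : ℕ) + 1 := by
        have h1 := hYub i
        have h2 : (h (b i) : ℝ) ≤ (k : ℝ) + (j0 : ℕ) := by exact_mod_cast hcount
        linarith
      exact Set.notMem_uIcc_of_lt this hYij

end AuxCombinatorics
lemma planar_iff (S : CPS P C) (Y : C → ℝ) :
    PlanarBus S Y ↔ ∀ (c : C) (p : P), S.f p ≠ c →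
      ¬(S.x p ∈ Icc (xl S c) (xr S c) ∧ Y c ∈ uIcc (S.y p) (Y (S.f p))) := by
  constructor
  · rintro ⟨-, h2, -⟩ c p hne ⟨hx', hy'⟩
    have hdisj := h2 c p hne
    have hmem1 : ((S.x p, Y c) : ℝ × ℝ) ∈ busSeg S Y c := ⟨rfl, hx'⟩
    have hmem2 : ((S.x p, Y c) : ℝ × ℝ) ∈ connSeg S Y p := ⟨rfl, hy'⟩
    exact Set.disjoint_left.1 hdisj hmem1 hmem2
  · intro H
    refine ⟨?_, ?_, ?_⟩
    · rintro c p hne ⟨hy', hx'⟩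
      exact H c p hne ⟨hx', hy'.symm ▸ Set.left_mem_uIcc⟩
    · intro c p hne
      rw [Set.disjoint_left]
      rintro q ⟨hq2, hq1⟩ ⟨hq1', hq2'⟩
      exact H c p hne ⟨hq1' ▸ hq1, hq2 ▸ hq2'⟩
    · intro p q hne
      rw [Set.disjoint_left]
      rintro z ⟨hz1, _⟩ ⟨hz1', _⟩
      exact hne (congrArg S.f (S.x_inj (hz1.symm.trans hz1')))


section AuxGeo
variable {k : ℕ} (π : Equiv.Perm (Fin k)) (S : CPS (Fin (2 * k)) (Fin k))
  (hx : ∀ i : Fin (2 * k), S.x i = ((i : ℕ) : ℝ) + 1)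
  (hy : ∀ i : Fin (2 * k), S.y i = ((i : ℕ) : ℝ) + 1)
  (hf1 : ∀ (j : Fin k) (i : Fin (2 * k)), (i : ℕ) = (j : ℕ) → S.f i = π j)
  (hf2 : ∀ (j : Fin k) (i : Fin (2 * k)), (i : ℕ) = k + (j : ℕ) → S.f i = j)

section Geo

include hf1 hf2

lemma preimage_eq (c : Fin k) :
    {p : Fin (2 * k) | S.f p = c} =
      {(⟨(π.symm c : ℕ), by have := (π.symm c).isLt; omega⟩ : Fin (2 * k)),
       (⟨k + (c : ℕ), by have := c.isLt; omega⟩ : Fin (2 * k))} := by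
  ext p
  simp only [Set.mem_setOf_eq, Set.mem_insert_iff, Set.mem_singleton_iff]
  constructor
  · intro hfp
    by_cases hlt : (p : ℕ) < k
    · left
      have : S.f p = π ⟨(p : ℕ), hlt⟩ := hf1 ⟨(p : ℕ), hlt⟩ p rfl
      rw [this] at hfp
      have : (⟨(p : ℕ), hlt⟩ : Fin k) = π.symm c := by
        rw [← hfp]; simp
      apply Fin.ext
      simpa using congrArg Fin.val this
    · right
      have hp2 : (p : ℕ) = k + ((p : ℕ) - k) := by omega
      have hlt2 : (p : ℕ) - k < k := by have := p.isLt; omega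
      have : S.f p = ⟨(p : ℕ) - k, hlt2⟩ := hf2 ⟨(p : ℕ) - k, hlt2⟩ p hp2
      rw [this] at hfp
      have := congrArg Fin.val hfp
      simp at this
      apply Fin.ext
      show (p : ℕ) = k + (c : ℕ)
      omega
  · rintro (rfl | rfl)
    · exact hf1 (π.symm c) _ rfl |>.trans (by simp)
    · exact hf2 c _ rfl

include hx

lemma xl_eq (c : Fin k) : xl S c = ((π.symm c : ℕ) : ℝ) + 1 := by
  unfold xl
  rw [preimage_eq π S hf1 hf2 c, Set.image_pair, csInf_pair]
  rw [hx, hx]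
  simp only [inf_eq_left]
  have h1 : (π.symm c : ℕ) ≤ k + (c : ℕ) := by have := (π.symm c).isLt; omega
  have : ((π.symm c : ℕ) : ℝ) ≤ ((k + (c : ℕ) : ℕ) : ℝ) := by exact_mod_cast h1
  push_cast at this ⊢
  linarith

lemma xr_eq (c : Fin k) : xr S c = (k : ℝ) + (c : ℕ) + 1 := by
  unfold xr
  rw [preimage_eq π S hf1 hf2 c, Set.image_pair, csSup_pair]
  rw [hx, hx]
  have h1 : (π.symm c : ℕ) ≤ k + (c : ℕ) := by have := (π.symm c).isLt; omega
  have h2 : ((π.symm c : ℕ) : ℝ) ≤ ((k + (c : ℕ) : ℕ) : ℝ) := by exact_mod_cast h1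
  have h3 : (((⟨(π.symm c : ℕ), by have := (π.symm c).isLt; omega⟩ : Fin (2 * k)) : ℕ) : ℝ)
      = ((π.symm c : ℕ) : ℝ) := rfl
  have h4 : (((⟨k + (c : ℕ), by have := c.isLt; omega⟩ : Fin (2 * k)) : ℕ) : ℝ)
      = ((k + (c : ℕ) : ℕ) : ℝ) := rfl
  rw [h3, h4, sup_eq_right.mpr (by linarith)]
  push_cast
  ring

include hy

lemma planar_iff_conds (Y : Fin k → ℝ) :
    PlanarBus S Y ↔ (CondA π Y ∧ CondB Y) := by
  rw [planar_iff]
  constructor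
  · intro H
    constructor
    · intro s t hst
      set pt : Fin (2 * k) := ⟨(t : ℕ), by have := t.isLt; omega⟩ with hpt
      have hfpt : S.f pt = π t := hf1 t pt rfl
      have hne : S.f pt ≠ π s := by
        rw [hfpt]
        exact fun he => absurd (π.injective he) (ne_of_gt hst)
      have h := H (π s) pt hne
      rw [hx, hy, hfpt, xl_eq π S hx hf1 hf2, xr_eq π S hx hf1 hf2] at h
      intro hmem
      apply h
      refine ⟨⟨?_, ?_⟩, ?_⟩
      · have : ((π.symm (π s) : ℕ) : ℝ) = ((s : ℕ) : ℝ) := by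
          norm_cast; simp
        rw [this]
        have : ((s : ℕ) : ℝ) ≤ ((t : ℕ) : ℝ) := by exact_mod_cast hst.le
        show ((s : ℕ) : ℝ) + 1 ≤ ((pt : ℕ) : ℝ) + 1
        have hptv : ((pt : ℕ) : ℝ) = ((t : ℕ) : ℝ) := by norm_cast
        rw [hptv]; linarith
      · have hptv : ((pt : ℕ) : ℝ) = ((t : ℕ) : ℝ) := by norm_cast
        rw [hptv]
        have h1 : ((t : ℕ) : ℝ) ≤ (k : ℝ) := by
          exact_mod_cast Nat.le_of_lt_succ (Nat.lt_succ_of_lt t.isLt)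
        have h2 : (0 : ℝ) ≤ ((π s : ℕ) : ℝ) := by positivity
        linarith
      · have hptv : ((pt : ℕ) : ℝ) = ((t : ℕ) : ℝ) := by norm_cast
        rw [hptv]
        exact hmem
    · intro j c hjc
      set pt : Fin (2 * k) := ⟨k + (j : ℕ), by have := j.isLt; omega⟩ with hpt
      have hfpt : S.f pt = j := hf2 j pt rfl
      have hne : S.f pt ≠ c := by rw [hfpt]; exact ne_of_lt hjc
      have h := H c pt hne
      rw [hx, hy, hfpt, xl_eq π S hx hf1 hf2, xr_eq π S hx hf1 hf2] at h
      intro hmem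
      apply h
      have hptv : ((pt : ℕ) : ℝ) = (k : ℝ) + ((j : ℕ) : ℝ) := by
        show (((k + (j : ℕ) : ℕ)) : ℝ) = _
        push_cast; ring
      refine ⟨⟨?_, ?_⟩, ?_⟩
      · rw [hptv]
        have h1 : ((π.symm c : ℕ) : ℝ) ≤ (k : ℝ) := by
          exact_mod_cast (π.symm c).isLt.le
        have h2 : (0 : ℝ) ≤ ((j : ℕ) : ℝ) := by positivity
        linarith
      · rw [hptv]
        have : ((j : ℕ) : ℝ) ≤ ((c : ℕ) : ℝ) := by exact_mod_cast hjc.le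
        linarith
      · rw [hptv]
        exact hmem
  · rintro ⟨hA, hB⟩ c p hne ⟨hxm, hym⟩
    rw [hx, hy, xl_eq π S hx hf1 hf2, xr_eq π S hx hf1 hf2] at *
    by_cases hlt : (p : ℕ) < k
    · set t : Fin k := ⟨(p : ℕ), hlt⟩ with ht
      have hfp : S.f p = π t := hf1 t p rfl
      have hsc : π.symm c < t := by
        have h1 : ((π.symm c : ℕ) : ℝ) + 1 ≤ ((p : ℕ) : ℝ) + 1 := hxm.1
        have h2 : (π.symm c : ℕ) ≤ (p : ℕ) := by exact_mod_cast (by linarith : ((π.symm c : ℕ) : ℝ) ≤ ((p : ℕ) : ℝ))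
        rw [Fin.lt_def]
        rcases Nat.lt_or_ge (π.symm c : ℕ) (t : ℕ) with h | h
        · exact h
        · exfalso
          have : (π.symm c : ℕ) = (t : ℕ) := by
            have : (t : ℕ) = (p : ℕ) := rfl
            omega
          have : π.symm c = t := Fin.ext this
          apply hne
          rw [hfp, ← this]
          simp
      have := hA (π.symm c) t hsc
      simp only [Equiv.apply_symm_apply] at this
      apply this
      rw [hfp] at hym
      have : ((t : ℕ) : ℝ) = ((p : ℕ) : ℝ) := rfl
      rw [this]
      exact hym
    · have hlt2 : (p : ℕ) - k < k := by have := p.isLt; omega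
      set j : Fin k := ⟨(p : ℕ) - k, hlt2⟩ with hj
      have hfp : S.f p = j := hf2 j p (by
        have hjv : (j : ℕ) = (p : ℕ) - k := rfl
        omega)
      have hjc : j < c := by
        have h1 : ((p : ℕ) : ℝ) + 1 ≤ (k : ℝ) + ((c : ℕ) : ℝ) + 1 := hxm.2
        have h2 : (p : ℕ) ≤ k + (c : ℕ) := by
          exact_mod_cast (by push_cast at h1 ⊢; linarith : ((p : ℕ) : ℝ) ≤ ((k + (c : ℕ) : ℕ) : ℝ))
        rw [Fin.lt_def]
        have hjv : (j : ℕ) = (p : ℕ) - k := rfl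
        rcases Nat.lt_or_ge (j : ℕ) (c : ℕ) with h | h
        · exact h
        · exfalso
          have : (j : ℕ) = (c : ℕ) := by omega
          exact hne (hfp.trans (Fin.ext this))
      have := hB j c hjc
      apply this
      rw [hfp] at hym
      have : (k : ℝ) + ((j : ℕ) : ℝ) + 1 = ((p : ℕ) : ℝ) + 1 := by
        have hjv : (j : ℕ) = (p : ℕ) - k := rfl
        have : ((j : ℕ) : ℝ) = ((p : ℕ) : ℝ) - (k : ℝ) := by
          rw [hjv]
          have : ((p : ℕ) - k : ℕ) = (p : ℕ) - k := rfl
          push_cast [Nat.cast_sub (by omega : k ≤ (p : ℕ))]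
          ring
        rw [this]; ring
      rw [this]
      exact hym
  
end Geo
end AuxGeo

/-- the diagonal point set `P_π` admits a planar bus realization
iff `π` is 2-stack pushall sortable. -/
theorem stmt16 {k : ℕ} (π : Equiv.Perm (Fin k)) (S : CPS (Fin (2 * k)) (Fin k))
    (hx : ∀ i : Fin (2 * k), S.x i = ((i : ℕ) : ℝ) + 1)
    (hy : ∀ i : Fin (2 * k), S.y i = ((i : ℕ) : ℝ) + 1)
    (hf1 : ∀ (j : Fin k) (i : Fin (2 * k)), (i : ℕ) = (j : ℕ) → S.f i = π j)
    (hf2 : ∀ (j : Fin k) (i : Fin (2 * k)), (i : ℕ) = k + (j : ℕ) → S.f i = j) :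
    (∃ Y : Fin k → ℝ, Function.Injective Y ∧ PlanarBus S Y) ↔
      TwoStackPushallSortable π := by
  constructor
  · rintro ⟨Y, hinj, hpl⟩
    obtain ⟨hA, hB⟩ := (planar_iff_conds π S hx hy hf1 hf2 Y).1 hpl
    exact sortable_of_Y π Y hinj hA hB
  · intro hs
    obtain ⟨Y, hinj, hA, hB⟩ := Y_of_sortable π hs
    exact ⟨Y, hinj, (planar_iff_conds π S hx hy hf1 hf2 Y).2 ⟨hA, hB⟩⟩
end

section
/- For a permutation π of {1, …, k}, if π is 2-stack pushall sortable, then the diagonal point set P_π admits a planar bus realization in which every bus is a center-bus, i.e., every bus of color c satisfies min{y(p) : f(p) = c} < y(c) < max{y(p) : f(p) = c}. -/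
open Set

variable {P C : Type} [Fintype P] [Fintype C]

/-- A center-bus: the bus height is strictly between the minimum and maximum
y-coordinates of its points. -/
noncomputable def isCenterBus (S : CPS P C) (Y : C → ℝ) (c : C) : Prop :=
  sInf (S.y '' {p | S.f p = c}) < Y c ∧ Y c < sSup (S.y '' {p | S.f p = c})


namespace Stmt17

open Finset

variable {k : ℕ}

/-- number of α-letters before `β_c`. -/
def sA (a b : Fin k → ℕ) (c : Fin k) : ℕ := #(Finset.univ.filter fun e => a e < b c)
/-- number of γ-letters before `β_c`. -/
def sG (g b : Fin k → ℕ) (c : Fin k) : ℕ := #(Finset.univ.filter fun e => g e < b c)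
/-- rank of `β_c` among the β-letters. -/
def rr (b : Fin k → ℕ) (c : Fin k) : ℕ := #(Finset.univ.filter fun e => b e < b c)

/-- the bus height of color `c`. -/
noncomputable def YY (a b g : Fin k → ℕ) (c : Fin k) : ℝ :=
  ((sA a b c + sG g b c : ℕ) : ℝ) + ((rr b c : ℝ) + 1) / ((k : ℝ) + 1)

lemma aa_iff (π : Equiv.Perm (Fin k)) (a : Fin k → ℕ)
    (haπ : StrictMono fun i => a (π i)) (e d : Fin k) :
    a e < a d ↔ π.symm e < π.symm d := by
  have h := haπ.lt_iff_lt (a := π.symm e) (b := π.symm d)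
  simpa using h

lemma card_symm_lt (π : Equiv.Perm (Fin k)) (d : Fin k) :
    #(Finset.univ.filter fun e : Fin k => π.symm e < π.symm d) = (π.symm d : ℕ) := by
  have h : (Finset.univ.filter fun e : Fin k => π.symm e < π.symm d)
      = Finset.image π (Finset.Iio (π.symm d)) := by
    ext e
    simp only [Finset.mem_filter, Finset.mem_univ, true_and, Finset.mem_image,
      Finset.mem_Iio]
    constructor
    · intro h; exact ⟨π.symm e, h, by simp⟩
    · rintro ⟨m, hm, rfl⟩; simpa using hm
  rw [h, Finset.card_image_of_injective _ π.injective, Fin.card_Iio]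

lemma card_symm_le (π : Equiv.Perm (Fin k)) (d : Fin k) :
    #(Finset.univ.filter fun e : Fin k => π.symm e ≤ π.symm d) = (π.symm d : ℕ) + 1 := by
  have h : (Finset.univ.filter fun e : Fin k => π.symm e ≤ π.symm d)
      = Finset.image π (Finset.Iic (π.symm d)) := by
    ext e
    simp only [Finset.mem_filter, Finset.mem_univ, true_and, Finset.mem_image,
      Finset.mem_Iic]
    constructor
    · intro h; exact ⟨π.symm e, h, by simp⟩
    · rintro ⟨m, hm, rfl⟩; simpa using hm
  rw [h, Finset.card_image_of_injective _ π.injective, Fin.card_Iic]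

lemma rr_lt (b : Fin k → ℕ) (c : Fin k) : rr b c < k := by
  have h : (Finset.univ.filter fun e : Fin k => b e < b c) ⊂ Finset.univ :=
    Finset.filter_ssubset.2 ⟨c, Finset.mem_univ c, by simp⟩
  have := Finset.card_lt_card h
  simpa [rr] using this

lemma frac_pos (b : Fin k → ℕ) (c : Fin k) : 0 < ((rr b c : ℝ) + 1) / ((k : ℝ) + 1) := by
  positivity

lemma frac_lt_one (b : Fin k → ℕ) (c : Fin k) :
    ((rr b c : ℝ) + 1) / ((k : ℝ) + 1) < 1 := by
  rw [div_lt_one (by positivity)]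
  have := rr_lt b c
  exact_mod_cast by omega

lemma sA_lb (π : Equiv.Perm (Fin k)) (a b : Fin k → ℕ)
    (haπ : StrictMono fun i => a (π i)) (hab : ∀ i, a i < b i) (c : Fin k) :
    (π.symm c : ℕ) + 1 ≤ sA a b c := by
  have hsub : (Finset.univ.filter fun e : Fin k => π.symm e ≤ π.symm c)
      ⊆ (Finset.univ.filter fun e => a e < b c) := by
    intro e he
    simp only [Finset.mem_filter, Finset.mem_univ, true_and] at he ⊢
    rcases lt_or_eq_of_le he with h | h
    · exact lt_trans ((aa_iff π a haπ e c).2 h) (hab c)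
    · have : e = c := π.symm.injective h
      subst this; exact hab e
  calc (π.symm c : ℕ) + 1 = _ := (card_symm_le π c).symm
    _ ≤ sA a b c := Finset.card_le_card hsub

lemma sA_ub (a b : Fin k → ℕ) (c : Fin k) : sA a b c ≤ k := by
  have := Finset.card_filter_le (Finset.univ : Finset (Fin k)) (fun e => a e < b c)
  simpa [sA] using this

lemma sG_ub (b g : Fin k → ℕ) (hg : StrictMono g) (hbg : ∀ i, b i < g i) (c : Fin k) :
    sG g b c ≤ (c : ℕ) := by
  have hsub : (Finset.univ.filter fun e : Fin k => g e < b c) ⊆ Finset.Iio c := by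
    intro e he
    simp only [Finset.mem_filter, Finset.mem_univ, true_and] at he
    rw [Finset.mem_Iio]
    exact hg.lt_iff_lt.1 (lt_trans he (hbg c))
  calc sG g b c ≤ _ := Finset.card_le_card hsub
    _ = (c : ℕ) := Fin.card_Iio c

lemma YY_lb (π : Equiv.Perm (Fin k)) (a b g : Fin k → ℕ)
    (haπ : StrictMono fun i => a (π i)) (hab : ∀ i, a i < b i) (c : Fin k) :
    ((π.symm c : ℕ) : ℝ) + 1 < YY a b g c := by
  have h1 : (π.symm c : ℕ) + 1 ≤ sA a b c + sG g b c :=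
    le_trans (sA_lb π a b haπ hab c) (Nat.le_add_right _ _)
  have h1' : ((π.symm c : ℕ) : ℝ) + 1 ≤ ((sA a b c + sG g b c : ℕ) : ℝ) := by
    exact_mod_cast h1
  have h2 := frac_pos b c
  unfold YY
  linarith

lemma YY_ub (a b g : Fin k → ℕ) (hg : StrictMono g) (hbg : ∀ i, b i < g i) (c : Fin k) :
    YY a b g c < (k : ℝ) + ((c : ℕ) : ℝ) + 1 := by
  have h1 : sA a b c + sG g b c ≤ k + (c : ℕ) :=
    Nat.add_le_add (sA_ub a b c) (sG_ub b g hg hbg c)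
  have h1' : ((sA a b c + sG g b c : ℕ) : ℝ) ≤ (k : ℝ) + ((c : ℕ) : ℝ) := by
    exact_mod_cast h1
  have h2 := frac_lt_one b c
  unfold YY
  linarith

lemma YY_mono (a b g : Fin k → ℕ) {c d : Fin k} (h : b c < b d) :
    YY a b g c < YY a b g d := by
  have hA : sA a b c ≤ sA a b d := by
    apply Finset.card_le_card
    intro e he
    simp only [Finset.mem_filter, Finset.mem_univ, true_and] at he ⊢
    omega
  have hG : sG g b c ≤ sG g b d := by
    apply Finset.card_le_card
    intro e he
    simp only [Finset.mem_filter, Finset.mem_univ, true_and] at he ⊢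
    omega
  have hR : rr b c + 1 ≤ rr b d := by
    have hsub : insert c (Finset.univ.filter fun e : Fin k => b e < b c)
        ⊆ (Finset.univ.filter fun e : Fin k => b e < b d) := by
      intro e he
      rcases Finset.mem_insert.1 he with rfl | he'
      · simp [h]
      · simp only [Finset.mem_filter, Finset.mem_univ, true_and] at he' ⊢
        omega
    have hnot : c ∉ (Finset.univ.filter fun e : Fin k => b e < b c) := by simp
    have := Finset.card_le_card hsub
    rwa [Finset.card_insert_of_notMem hnot] at this
  have h1 : ((sA a b c + sG g b c : ℕ) : ℝ) ≤ ((sA a b d + sG g b d : ℕ) : ℝ) := by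
    exact_mod_cast Nat.add_le_add hA hG
  have h2 : ((rr b c : ℝ) + 1) / ((k : ℝ) + 1) < ((rr b d : ℝ) + 1) / ((k : ℝ) + 1) := by
    have hcast : (rr b c : ℝ) + 1 < (rr b d : ℝ) + 1 := by
      have : (rr b c : ℝ) + 1 ≤ (rr b d : ℝ) := by exact_mod_cast hR
      linarith
    gcongr
  unfold YY
  linarith

lemma YY_inj (a b g : Fin k → ℕ) (hb : Function.Injective b) :
    Function.Injective (YY a b g) := by
  intro c d h
  by_contra hne
  rcases lt_trichotomy (b c) (b d) with hh | hh | hh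
  · exact absurd h (ne_of_lt (YY_mono a b g hh))
  · exact hne (hb hh)
  · exact absurd h.symm (ne_of_lt (YY_mono a b g hh))

lemma YY_noninteger (a b g : Fin k → ℕ) (c : Fin k) (n : ℕ) :
    YY a b g c ≠ (n : ℝ) + 1 := by
  intro h
  have h1 := frac_pos b c
  have h2 := frac_lt_one b c
  set m := sA a b c + sG g b c with hm
  have hlo : ((m : ℕ) : ℝ) < (n : ℝ) + 1 := by rw [← h]; unfold YY; linarith
  have hhi : ((n : ℝ) + 1) < ((m : ℕ) : ℝ) + 1 := by rw [← h]; unfold YY; linarith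
  have hlo' : m < n + 1 := by exact_mod_cast hlo
  have hhi' : n + 1 < m + 1 := by exact_mod_cast hhi
  omega

/-- Key fact for the region above the diagonal. -/
lemma key2 (π : Equiv.Perm (Fin k)) (a b g : Fin k → ℕ)
    (haπ : StrictMono fun i => a (π i))
    (h_ab_ne : ∀ i j, a i ≠ b j)
    (hag : ∀ i j, a i < g j)
    (hv : ∀ i j : Fin k, i ≠ j → a i < a j → a j < b i → b j < b i)
    {c d : Fin k} (hcd : a c < a d) (hbb : b c < b d) :
    YY a b g c < ((π.symm d : ℕ) : ℝ) + 1 := by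
  have hne : c ≠ d := by rintro rfl; exact lt_irrefl _ hcd
  have hba : b c < a d := by
    rcases lt_or_gt_of_ne (h_ab_ne d c) with h | h
    · have := hv c d hne hcd h
      omega
    · exact h
  have hsG : sG g b c = 0 := by
    rw [sG, Finset.card_eq_zero, Finset.filter_eq_empty_iff]
    intro e _
    have := hag d e
    omega
  have hsA : sA a b c ≤ (π.symm d : ℕ) := by
    have hsub : (Finset.univ.filter fun e : Fin k => a e < b c)
        ⊆ (Finset.univ.filter fun e : Fin k => π.symm e < π.symm d) := by
      intro e he
      simp only [Finset.mem_filter, Finset.mem_univ, true_and] at he ⊢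
      exact (aa_iff π a haπ e d).1 (by omega)
    calc sA a b c ≤ _ := Finset.card_le_card hsub
      _ = (π.symm d : ℕ) := card_symm_lt π d
  have h1 : ((sA a b c + sG g b c : ℕ) : ℝ) ≤ ((π.symm d : ℕ) : ℝ) := by
    exact_mod_cast by omega
  have h2 := frac_lt_one b c
  unfold YY
  linarith

/-- Key fact for the region below the diagonal. -/
lemma key3 (a b g : Fin k → ℕ)
    (hg : StrictMono g)
    (h_bg_ne : ∀ i j, b i ≠ g j)
    (hag : ∀ i j, a i < g j)
    (hvi : ∀ i j : Fin k, i ≠ j → b i < b j → b j < g i → g j < g i)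
    {c d : Fin k} (hdc : (d : ℕ) < (c : ℕ)) (hbb : b d < b c) :
    (k : ℝ) + ((d : ℕ) : ℝ) + 1 < YY a b g c := by
  have hnedc : d ≠ c := Fin.ne_of_val_ne (Nat.ne_of_lt hdc)
  have hgd : g d < b c := by
    rcases lt_or_gt_of_ne (h_bg_ne c d) with h | h
    · have h1 := hvi d c hnedc hbb h
      have h2 := hg (show d < c from hdc)
      omega
    · exact h
  have hsA : sA a b c = k := by
    rw [sA, Finset.filter_true_of_mem, Finset.card_univ, Fintype.card_fin]
    intro e _
    have := hag e d
    omega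
  have hsG : (d : ℕ) + 1 ≤ sG g b c := by
    have hsub : Finset.Iic d ⊆ (Finset.univ.filter fun e : Fin k => g e < b c) := by
      intro e he
      rw [Finset.mem_Iic] at he
      simp only [Finset.mem_filter, Finset.mem_univ, true_and]
      have := hg.monotone he
      omega
    calc (d : ℕ) + 1 = _ := (Fin.card_Iic d).symm
      _ ≤ sG g b c := Finset.card_le_card hsub
  have h1 : (k : ℝ) + ((d : ℕ) : ℝ) + 1 ≤ ((sA a b c + sG g b c : ℕ) : ℝ) := by
    push_cast
    have : k + ((d : ℕ) + 1) ≤ sA a b c + sG g b c := by omega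
    exact_mod_cast by linarith [this]
  have h2 := frac_pos b c
  unfold YY
  linarith

end Stmt17

open Stmt17 in
/-- if `π` is 2-stack pushall sortable then the diagonal point set
`P_π` admits a planar bus realization in which every bus is a center-bus. -/
theorem stmt17 {k : ℕ} (π : Equiv.Perm (Fin k)) (S : CPS (Fin (2 * k)) (Fin k))
    (hx : ∀ i : Fin (2 * k), S.x i = ((i : ℕ) : ℝ) + 1)
    (hy : ∀ i : Fin (2 * k), S.y i = ((i : ℕ) : ℝ) + 1)
    (hf1 : ∀ (j : Fin k) (i : Fin (2 * k)), (i : ℕ) = (j : ℕ) → S.f i = π j)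
    (hf2 : ∀ (j : Fin k) (i : Fin (2 * k)), (i : ℕ) = k + (j : ℕ) → S.f i = j) :
    TwoStackPushallSortable π →
      ∃ Y : Fin k → ℝ, Function.Injective Y ∧ PlanarBus S Y ∧
        ∀ c : Fin k, isCenterBus S Y c := by
  rintro ⟨a, b, g, -, hbinj, -, h_ab_ne, -, h_bg_ne, haπ, hgmono, hag, hab, hbg, hv, hvi⟩
  -- the two points of each color
  have hI1lt : ∀ c : Fin k, (π.symm c : ℕ) < 2 * k := fun c => by
    have := (π.symm c).isLt; omega
  have hI2lt : ∀ c : Fin k, k + (c : ℕ) < 2 * k := fun c => by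
    have := c.isLt; omega
  set I1 : Fin k → Fin (2 * k) := fun c => ⟨(π.symm c : ℕ), hI1lt c⟩ with hI1
  set I2 : Fin k → Fin (2 * k) := fun c => ⟨k + (c : ℕ), hI2lt c⟩ with hI2
  have hfib : ∀ c : Fin k, {p : Fin (2 * k) | S.f p = c} = {I1 c, I2 c} := by
    intro c
    ext p
    simp only [Set.mem_setOf_eq, Set.mem_insert_iff, Set.mem_singleton_iff]
    constructor
    · intro hp
      rcases lt_or_ge (p : ℕ) k with h | h
      · left
        have hfp := hf1 ⟨(p : ℕ), h⟩ p rfl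
        have h2 : π.symm c = ⟨(p : ℕ), h⟩ := by
          rw [← hp, hfp]; exact Equiv.symm_apply_apply π _
        apply Fin.ext
        simp [hI1, h2]
      · right
        have hplt := p.isLt
        have hfp := hf2 ⟨(p : ℕ) - k, by omega⟩ p (by simp; omega)
        have h3 : (c : ℕ) = (p : ℕ) - k := by rw [← hp, hfp]
        apply Fin.ext
        simp [hI2]
        omega
    · rintro (rfl | rfl)
      · have := hf1 (π.symm c) (I1 c) rfl
        rw [this]
        simp
      · exact hf2 c (I2 c) rfl
  have hxI1 : ∀ c, S.x (I1 c) = ((π.symm c : ℕ) : ℝ) + 1 := fun c => by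
    rw [hx]
  have hxI2 : ∀ c, S.x (I2 c) = (k : ℝ) + ((c : ℕ) : ℝ) + 1 := fun c => by
    rw [hx]; simp [hI2]
  have hyI1 : ∀ c, S.y (I1 c) = ((π.symm c : ℕ) : ℝ) + 1 := fun c => by
    rw [hy]
  have hyI2 : ∀ c, S.y (I2 c) = (k : ℝ) + ((c : ℕ) : ℝ) + 1 := fun c => by
    rw [hy]; simp [hI2]
  have hle12 : ∀ c : Fin k, ((π.symm c : ℕ) : ℝ) + 1 ≤ (k : ℝ) + ((c : ℕ) : ℝ) + 1 := by
    intro c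
    have h1 : ((π.symm c : ℕ) : ℝ) < (k : ℝ) := by exact_mod_cast (π.symm c).isLt
    have h2 : (0 : ℝ) ≤ ((c : ℕ) : ℝ) := by positivity
    linarith
  have hxl : ∀ c, xl S c = ((π.symm c : ℕ) : ℝ) + 1 := by
    intro c
    rw [xl, hfib c, Set.image_insert_eq, Set.image_singleton, hxI1, hxI2,
      csInf_pair]
    exact min_eq_left (hle12 c)
  have hxr : ∀ c, xr S c = (k : ℝ) + ((c : ℕ) : ℝ) + 1 := by
    intro c
    rw [xr, hfib c, Set.image_insert_eq, Set.image_singleton, hxI1, hxI2,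
      csSup_pair]
    exact max_eq_right (hle12 c)
  have hyinf : ∀ c, sInf (S.y '' {p | S.f p = c}) = ((π.symm c : ℕ) : ℝ) + 1 := by
    intro c
    rw [hfib c, Set.image_insert_eq, Set.image_singleton, hyI1, hyI2, csInf_pair]
    exact min_eq_left (hle12 c)
  have hysup : ∀ c, sSup (S.y '' {p | S.f p = c}) = (k : ℝ) + ((c : ℕ) : ℝ) + 1 := by
    intro c
    rw [hfib c, Set.image_insert_eq, Set.image_singleton, hyI1, hyI2, csSup_pair]
    exact max_eq_right (hle12 c)
  refine ⟨YY a b g, YY_inj a b g hbinj, ⟨?_, ?_, ?_⟩, ?_⟩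
  · -- no bus contains a point of another color
    intro c p _ hmem
    obtain ⟨h1, -⟩ := hmem
    simp only at h1
    rw [hy p] at h1
    exact YY_noninteger a b g c (p : ℕ) h1.symm
  · -- buses and connections of other colors are disjoint
    intro c p hne
    rw [Set.disjoint_left]
    intro q hq hq'
    obtain ⟨hq2, hq1⟩ := hq
    obtain ⟨hq1', hq2'⟩ := hq'
    rw [hxl c, hxr c] at hq1
    rw [hq1', hx p] at hq1
    rw [hq2, hy p] at hq2'
    obtain ⟨hqlo, hqhi⟩ := hq1
    rcases lt_or_ge (p : ℕ) k with h | h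
    · -- p is a lower point
      have hd := hf1 ⟨(p : ℕ), h⟩ p rfl
      have hsymm : π.symm (S.f p) = ⟨(p : ℕ), h⟩ := by
        rw [hd]; exact Equiv.symm_apply_apply π _
      have hsv : (π.symm (S.f p) : ℕ) = (p : ℕ) := by rw [hsymm]
      have hlt : π.symm c < π.symm (S.f p) := by
        have h4 : (π.symm c : ℕ) ≤ (p : ℕ) := by exact_mod_cast (by linarith :
          ((π.symm c : ℕ) : ℝ) ≤ ((p : ℕ) : ℝ))
        have h5 : π.symm c ≠ π.symm (S.f p) := fun hE =>
          hne (π.symm.injective hE).symm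
        have h6 : (π.symm c : ℕ) ≠ (π.symm (S.f p) : ℕ) := fun hE =>
          h5 (Fin.ext hE)
        rw [Fin.lt_def, hsv]
        omega
      have hacd : a c < a (S.f p) := (aa_iff π a haπ c (S.f p)).2 hlt
      have hylt : ((p : ℕ) : ℝ) + 1 < YY a b g (S.f p) := by
        have := YY_lb π a b g haπ hab (S.f p)
        rwa [hsv] at this
      rw [Set.uIcc_of_le (le_of_lt hylt)] at hq2'
      obtain ⟨hlo, hhi⟩ := hq2'
      rcases lt_trichotomy (b c) (b (S.f p)) with hbb | hbb | hbb
      · have hk2 := key2 π a b g haπ h_ab_ne hag hv hacd hbb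
        rw [hsv] at hk2
        linarith
      · exact hne (hbinj hbb).symm
      · have := YY_mono a b g hbb
        linarith
    · -- p is an upper point
      have hplt := p.isLt
      have hd := hf2 ⟨(p : ℕ) - k, by omega⟩ p (by simp; omega)
      have hdval : ((S.f p : ℕ)) = (p : ℕ) - k := by rw [hd]
      have hpval : (p : ℕ) = k + (S.f p : ℕ) := by omega
      have hdlec : ((S.f p : ℕ)) < (c : ℕ) := by
        have h4 : ((p : ℕ) : ℝ) ≤ (k : ℝ) + ((c : ℕ) : ℝ) := by linarith
        have h5 : (p : ℕ) ≤ k + (c : ℕ) := by exact_mod_cast h4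
        have h6 : (S.f p : ℕ) ≠ (c : ℕ) := fun hE => hne (Fin.ext hE)
        omega
      have hyd : YY a b g (S.f p) < ((p : ℕ) : ℝ) + 1 := by
        have := YY_ub a b g hgmono hbg (S.f p)
        have hc : ((p : ℕ) : ℝ) = (k : ℝ) + ((S.f p : ℕ) : ℝ) := by
          rw [hpval]; push_cast; ring
        rw [hc]
        linarith
      rw [Set.uIcc_comm, Set.uIcc_of_le (le_of_lt hyd)] at hq2'
      obtain ⟨hlo, hhi⟩ := hq2'
      rcases lt_trichotomy (b (S.f p)) (b c) with hbb | hbb | hbb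
      · have hk3 := key3 a b g hgmono h_bg_ne hag hvi hdlec hbb
        have hc : ((p : ℕ) : ℝ) = (k : ℝ) + ((S.f p : ℕ) : ℝ) := by
          rw [hpval]; push_cast; ring
        rw [hc] at hhi
        linarith
      · exact hne (hbinj hbb)
      · have := YY_mono a b g hbb
        linarith
  · -- connections of different colors are disjoint
    intro p q hne
    rw [Set.disjoint_left]
    intro z hz hz'
    exact hne (congrArg S.f (S.x_inj (hz.1.symm.trans hz'.1)))
  · -- all buses are center-buses
    intro c
    constructor
    · rw [hyinf c]
      exact YY_lb π a b g haπ hab c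
    · rw [hysup c]
      exact YY_ub a b g hgmono hbg c
end
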